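/- arXiv:2205.14502 — 6 statements merged into one kernel-verified Lean document; each statement's English description precedes it below -/
import Mathlib

section
/- Every Wilder continuum is a D**-continuum. -/
/-- A topological space is *Wilder* if for any three distinct points `x, y, z` there is a
compact connected subset containing `x` and exactly one of `y` and `z`. -/
def WilderSpace (X : Type*) [TopologicalSpace X] : Prop :=
  ∀ x y z : X, x ≠ y → y ≠ z → x ≠ z →
    ∃ C : Set X, IsCompact C ∧ IsConnected C ∧ x ∈ C ∧ Xor' (y ∈ C) (z ∈ C)

/-- A topological space is a *D**-space* if for every pair of disjoint nondegenerate
subcontinua `A, B` there is a subcontinuum `C` meeting both `A` and `B` with `B \ C ≠ ∅`. -/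
def DStarStarSpace (X : Type*) [TopologicalSpace X] : Prop :=
  ∀ A B : Set X, IsCompact A → IsConnected A → A.Nontrivial →
    IsCompact B → IsConnected B → B.Nontrivial → Disjoint A B →
    ∃ C : Set X, IsCompact C ∧ IsConnected C ∧
      (A ∩ C).Nonempty ∧ (B ∩ C).Nonempty ∧ (B \ C).Nonempty

/-- Every Wilder continuum is a D**-continuum. -/
theorem wilder_isDStarStar (X : Type*) [MetricSpace X] [CompactSpace X]
    [ConnectedSpace X] (hX : WilderSpace X) : DStarStarSpace X := by
  intro A B hAc hAconn hAnt hBc hBconn hBnt hdisj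
  obtain ⟨a, ha⟩ := hAconn.nonempty
  obtain ⟨b₁, hb₁, b₂, hb₂, hb12⟩ := hBnt
  have hab₁ : a ≠ b₁ := fun h => hdisj.ne_of_mem ha hb₁ h
  have hab₂ : a ≠ b₂ := fun h => hdisj.ne_of_mem ha hb₂ h
  obtain ⟨C, hCc, hCconn, haC, hxor⟩ := hX a b₁ b₂ hab₁ hb12 hab₂
  rcases hxor with ⟨h1, h2⟩ | ⟨h2, h1⟩
  · exact ⟨C, hCc, hCconn, ⟨a, ha, haC⟩, ⟨b₁, hb₁, h1⟩, ⟨b₂, hb₂, h2⟩⟩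
  · exact ⟨C, hCc, hCconn, ⟨a, ha, haC⟩, ⟨b₂, hb₂, h2⟩, ⟨b₁, hb₁, h1⟩⟩
end

section
/- A continuum X is a D**-continuum if and only if for every point a ∈ X and every nondegenerate subcontinuum B ⊆ X with a ∉ B, there exists a subcontinuum C ⊆ X such that a ∈ C, B ∩ C ≠ ∅, and B \ C ≠ ∅. -/
open Set

/-- Boundary bumping: in a compact connected Hausdorff space, the connected component
of a point inside a proper closed subset meets the frontier of that subset. -/
lemma bump_lemma {X : Type*} [TopologicalSpace X] [T2Space X] [CompactSpace X]
    [ConnectedSpace X] {E : Set X} (hE : IsClosed E) (hEne : E ≠ univ) {a : X} (ha : a ∈ E) :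
    (connectedComponentIn E a ∩ frontier E).Nonempty := by
  have : CompactSpace E := isCompact_iff_compactSpace.mp hE.isCompact
  by_contra h
  rw [not_nonempty_iff_eq_empty] at h
  set pt : E := ⟨a, ha⟩
  have hKimg : connectedComponentIn E a = Subtype.val '' connectedComponent pt :=
    connectedComponentIn_eq_image ha
  have hfrE : frontier E ⊆ E := hE.frontier_subset
  have hcc : connectedComponent pt = ⋂ s : { s : Set E // IsClopen s ∧ pt ∈ s }, (s : Set E) :=
    connectedComponent_eq_iInter_isClopen pt
  -- each clopen set's image is closed in X
  have hZclosed : ∀ s : { s : Set E // IsClopen s ∧ pt ∈ s },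
      IsClosed (Subtype.val '' (s : Set E)) := fun s =>
    ((s.2.1.isClosed.isCompact).image continuous_subtype_val).isClosed
  have hfrcomp : IsCompact (frontier E) := isClosed_frontier.isCompact
  have hdisj : frontier E ∩ ⋂ s : { s : Set E // IsClopen s ∧ pt ∈ s },
      Subtype.val '' (s : Set E) = ∅ := by
    ext x
    simp only [mem_inter_iff, mem_iInter, mem_empty_iff_false, iff_false, not_and]
    intro hxfr hxall
    have hxE : x ∈ E := hfrE hxfr
    have hxK : x ∈ connectedComponentIn E a := by
      rw [hKimg]
      refine ⟨⟨x, hxE⟩, ?_, rfl⟩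
      rw [hcc]
      refine mem_iInter.mpr fun s => ?_
      obtain ⟨y, hy, hyval⟩ := hxall s
      rwa [show (⟨x, hxE⟩ : E) = y from Subtype.ext hyval.symm]
    exact absurd (mem_inter hxK hxfr) (by simp [h])
  obtain ⟨t, ht⟩ := hfrcomp.elim_finite_subfamily_closed _ hZclosed hdisj
  set F : Set E := ⋂ s ∈ t, (s : Set E) with hF
  have hFclopen : IsClopen F := by
    apply Set.Finite.isClopen_biInter t.finite_toSet
    exact fun s _ => s.2.1
  have hptF : pt ∈ F := mem_iInter₂.mpr fun s _ => s.2.2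
  set G : Set X := Subtype.val '' F with hG
  have haG : a ∈ G := ⟨pt, hptF, rfl⟩
  have hGE : G ⊆ E := by rintro x ⟨y, _, rfl⟩; exact y.2
  have hGfr : G ∩ frontier E = ∅ := by
    rw [← subset_empty_iff, ← ht]
    rintro x ⟨⟨y, hy, rfl⟩, hxfr⟩
    exact ⟨hxfr, mem_iInter₂.mpr fun s hs => ⟨y, mem_iInter₂.mp hy s hs, rfl⟩⟩
  have hGint : G ⊆ interior E := by
    intro x hx
    by_contra hxint
    have : x ∈ frontier E := ⟨by rw [hE.closure_eq]; exact hGE hx, hxint⟩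
    exact absurd (mem_inter hx this) (by simp [hGfr])
  have hGclosed : IsClosed G := (hFclopen.isClosed.isCompact.image continuous_subtype_val).isClosed
  have hGopen : IsOpen G := by
    obtain ⟨U, hU, hUF⟩ := isOpen_induced_iff.mp hFclopen.isOpen
    have hGU : G = U ∩ interior E := by
      apply Subset.antisymm
      · intro x hx
        refine ⟨?_, hGint hx⟩
        obtain ⟨y, hy, rfl⟩ := hx
        rw [← hUF] at hy; exact hy
      · rintro x ⟨hxU, hxint⟩
        have hxE : x ∈ E := interior_subset hxint
        exact ⟨⟨x, hxE⟩, by rw [← hUF]; exact hxU, rfl⟩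
    rw [hGU]; exact hU.inter isOpen_interior
  rcases isClopen_iff.mp ⟨hGclosed, hGopen⟩ with h0 | h1
  · simp [h0] at haG
  · exact hEne (eq_univ_of_univ_subset (h1 ▸ hGE))

/-- A continuum `X` is a D**-continuum iff for every point `a ∈ X` and every nondegenerate
subcontinuum `B ⊆ X` with `a ∉ B`, there is a subcontinuum `C ⊆ X` with `a ∈ C`,
`B ∩ C ≠ ∅` and `B \ C ≠ ∅`. -/
theorem dStarStar_iff_pointed (X : Type*) [MetricSpace X] [CompactSpace X]
    [ConnectedSpace X] :
    DStarStarSpace X ↔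
      ∀ (a : X) (B : Set X), IsCompact B → IsConnected B → B.Nontrivial → a ∉ B →
        ∃ C : Set X, IsCompact C ∧ IsConnected C ∧ a ∈ C ∧
          (B ∩ C).Nonempty ∧ (B \ C).Nonempty := by
  constructor
  · intro hD a B hBc hBconn hBnt haB
    -- find a small nondegenerate continuum around `a` disjoint from `B`
    have hBclosed : IsClosed B := hBc.isClosed
    obtain ⟨ε, hε, hball⟩ := Metric.isOpen_iff.mp hBclosed.isOpen_compl a haB
    set E : Set X := Metric.closedBall a (ε / 2) with hEdef
    have hEclosed : IsClosed E := Metric.isClosed_closedBall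
    have haE : a ∈ E := Metric.mem_closedBall_self (by linarith)
    have haint : a ∈ interior E :=
      interior_maximal Metric.ball_subset_closedBall Metric.isOpen_ball
        (Metric.mem_ball_self (by linarith))
    have hEB : ∀ x ∈ E, x ∉ B := by
      intro x hx
      have hd : dist x a ≤ ε / 2 := hx
      exact hball (show dist x a < ε by linarith)
    obtain ⟨b, hbB⟩ := hBnt.nonempty
    have hEne : E ≠ Set.univ := fun he => hEB b (he ▸ Set.mem_univ b) hbB
    obtain ⟨p, hpK, hpfr⟩ := bump_lemma hEclosed hEne haE
    set K : Set X := connectedComponentIn E a with hKdef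
    have haK : a ∈ K := mem_connectedComponentIn haE
    have hKE : K ⊆ E := connectedComponentIn_subset E a
    have hKcomp : IsCompact K := by
      have : CompactSpace E := isCompact_iff_compactSpace.mp hEclosed.isCompact
      rw [hKdef, connectedComponentIn_eq_image haE]
      exact isClosed_connectedComponent.isCompact.image continuous_subtype_val
    have hKconn : IsConnected K := ⟨⟨a, haK⟩, isPreconnected_connectedComponentIn⟩
    have hKnt : K.Nontrivial := by
      refine ⟨p, hpK, a, haK, fun hpa => ?_⟩
      rw [hpa] at hpfr
      exact hpfr.2 haint
    have hKB : Disjoint K B := Set.disjoint_left.mpr fun x hx => hEB x (hKE hx)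
    obtain ⟨C, hCc, hCconn, ⟨x, hxK, hxC⟩, ⟨y, hyB, hyC⟩, ⟨z, hzB, hzC⟩⟩ :=
      hD K B hKcomp hKconn hKnt hBc hBconn hBnt hKB
    refine ⟨C ∪ K, hCc.union hKcomp, hCconn.union ⟨x, hxC, hxK⟩ hKconn, Or.inr haK,
      ⟨y, hyB, Or.inl hyC⟩, ⟨z, hzB, ?_⟩⟩
    rintro (h | h)
    · exact hzC h
    · exact Set.disjoint_left.mp hKB h hzB
  · intro hp A B hAc hAconn hAnt hBc hBconn hBnt hAB
    obtain ⟨a, haA⟩ := hAnt.nonempty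
    obtain ⟨C, hCc, hCconn, haC, hBC, hBnC⟩ :=
      hp a B hBc hBconn hBnt (Set.disjoint_left.mp hAB haA)
    exact ⟨C, hCc, hCconn, ⟨a, haA, haC⟩, hBC, hBnC⟩
end

section
/- The sin(1/x)-continuum, i.e. the subset {(t, sin(1/t)) : 0 < t ≤ 1} ∪ ({0} × [-1, 1]) of ℝ², is a D-continuum but is not a D**-continuum. -/
/-- A topological space is a *D-space* if for every pair of disjoint nondegenerate
subcontinua `A, B` there is a subcontinuum `C` meeting both `A` and `B` with
`(A ∪ B) \ C ≠ ∅`. -/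
def DSpace (X : Type*) [TopologicalSpace X] : Prop :=
  ∀ A B : Set X, IsCompact A → IsConnected A → A.Nontrivial →
    IsCompact B → IsConnected B → B.Nontrivial → Disjoint A B →
    ∃ C : Set X, IsCompact C ∧ IsConnected C ∧
      (A ∩ C).Nonempty ∧ (B ∩ C).Nonempty ∧ ((A ∪ B) \ C).Nonempty

/-- The `sin(1/x)`-continuum: `{(t, sin(1/t)) : 0 < t ≤ 1} ∪ ({0} × [-1, 1]) ⊆ ℝ²`. -/
def sinOneOverXContinuum : Set (ℝ × ℝ) :=
  {p : ℝ × ℝ | ∃ t : ℝ, 0 < t ∧ t ≤ 1 ∧ p = (t, Real.sin (1 / t))} ∪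
    ({0} : Set ℝ) ×ˢ Set.Icc (-1 : ℝ) 1

section SinOneOverXProof
open Set Real Topology Filter

namespace SinAux

noncomputable def phi : ℝ → ℝ × ℝ := fun t => (t, Real.sin (1 / t))

def graphOn (s : Set ℝ) : Set (ℝ × ℝ) := phi '' s

def Vseg : Set (ℝ × ℝ) := ({0} : Set ℝ) ×ˢ Set.Icc (-1 : ℝ) 1

local notation "S" => sinOneOverXContinuum

lemma S_eq_union : S = graphOn (Ioc 0 1) ∪ Vseg := by
  unfold sinOneOverXContinuum graphOn Vseg phi
  ext p
  simp only [mem_union, mem_setOf_eq, mem_image, mem_Ioc]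
  constructor
  · rintro (⟨t, h1, h2, rfl⟩ | h)
    · exact Or.inl ⟨t, ⟨h1, h2⟩, rfl⟩
    · exact Or.inr h
  · rintro (⟨t, ⟨h1, h2⟩, rfl⟩ | h)
    · exact Or.inl ⟨t, h1, h2, rfl⟩
    · exact Or.inr h

lemma phi_cont : ContinuousOn phi (Ioi (0:ℝ)) := by
  apply ContinuousOn.prodMk continuousOn_id
  exact Real.continuous_sin.comp_continuousOn
    (continuousOn_const.div continuousOn_id fun x hx => ne_of_gt hx)

lemma phi_fst (t : ℝ) : (phi t).1 = t := rfl

lemma mem_Vseg {p : ℝ × ℝ} : p ∈ Vseg ↔ p.1 = 0 ∧ -1 ≤ p.2 ∧ p.2 ≤ 1 := by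
  constructor
  · rintro ⟨h1, h2⟩
    exact ⟨h1, h2.1, h2.2⟩
  · rintro ⟨h1, h2, h3⟩
    exact ⟨h1, h2, h3⟩

lemma Vseg_sub_S : Vseg ⊆ S := by rw [S_eq_union]; exact subset_union_right

lemma graph_sub_S {s : Set ℝ} (h : s ⊆ Ioc 0 1) : graphOn s ⊆ S := by
  rw [S_eq_union]
  exact ((Set.image_mono h).trans subset_union_left)

lemma eq_phi_of_mem_S {p : ℝ × ℝ} (hp : p ∈ S) (h : 0 < p.1) : p = phi p.1 := by
  rw [S_eq_union] at hp
  rcases hp with ⟨t, _, rfl⟩ | hp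
  · rfl
  · exact absurd (mem_Vseg.1 hp).1 (ne_of_gt h)

lemma mem_Vseg_of_mem_S {p : ℝ × ℝ} (hp : p ∈ S) (h : p.1 = 0) : p ∈ Vseg := by
  rw [S_eq_union] at hp
  rcases hp with ⟨t, ht, rfl⟩ | hp
  · exact absurd h (ne_of_gt ht.1)
  · exact hp

lemma S_fst_nonneg {p : ℝ × ℝ} (hp : p ∈ S) : 0 ≤ p.1 := by
  rw [S_eq_union] at hp
  rcases hp with ⟨t, ht, rfl⟩ | hp
  · exact le_of_lt ht.1
  · exact le_of_eq (mem_Vseg.1 hp).1.symm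

lemma S_fst_le_one {p : ℝ × ℝ} (hp : p ∈ S) : p.1 ≤ 1 := by
  rw [S_eq_union] at hp
  rcases hp with ⟨t, ht, rfl⟩ | hp
  · exact ht.2
  · rw [(mem_Vseg.1 hp).1]; exact zero_le_one

lemma closure_graph_le (v : ℝ) : closure (graphOn (Ioc 0 v)) ⊆ {p : ℝ × ℝ | p.1 ≤ v} := by
  apply closure_minimal _ (isClosed_le continuous_fst continuous_const)
  rintro p ⟨t, ht, rfl⟩
  exact ht.2

lemma Vseg_sub_closure {v : ℝ} (hv : 0 < v) : Vseg ⊆ closure (graphOn (Ioc 0 v)) := by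
  rintro ⟨x, y⟩ hp
  obtain ⟨hx, hy1, hy2⟩ := mem_Vseg.1 hp
  simp only at hx
  subst hx
  set θ := Real.arcsin y with hθ
  have hsθ : Real.sin θ = y := Real.sin_arcsin hy1 hy2
  have hθlb : -(π/2) ≤ θ := Real.neg_pi_div_two_le_arcsin y
  set u : ℕ → ℝ := fun n => θ + ((n : ℝ) + 1) * (2 * π) with hu
  have hπ : 3 < π := by
    have := Real.pi_gt_three
    linarith
  have hupos : ∀ n, 0 < u n := by
    intro n
    have hn : (1 : ℝ) ≤ (n : ℝ) + 1 := by
      have : (0:ℝ) ≤ n := Nat.cast_nonneg n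
      linarith
    have h2π : (2 * π) ≤ ((n : ℝ) + 1) * (2 * π) := by nlinarith
    simp only [hu]
    nlinarith
  set t : ℕ → ℝ := fun n => (u n)⁻¹ with htdef
  have hsin : ∀ n, Real.sin (1 / t n) = y := by
    intro n
    have : (1 : ℝ) / t n = u n := by
      simp [htdef]
    rw [this, hu]
    have := Real.sin_add_int_mul_two_pi θ ((n : ℤ) + 1)
    push_cast at this
    rw [← hsθ]
    convert this using 3 <;> push_cast <;> ring
  have hut : Tendsto u atTop atTop := by
    apply tendsto_atTop_add_const_left
    apply Tendsto.atTop_mul_const (by positivity)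
    exact tendsto_atTop_add_const_right _ _ tendsto_natCast_atTop_atTop
  have htt : Tendsto t atTop (nhds 0) := hut.inv_tendsto_atTop
  have hev : ∀ᶠ n in atTop, phi (t n) ∈ graphOn (Ioc 0 v) := by
    have hlt : ∀ᶠ n in atTop, t n < v := htt.eventually_lt_const hv
    filter_upwards [hlt] with n hn
    exact ⟨t n, ⟨inv_pos.2 (hupos n), le_of_lt hn⟩, rfl⟩
  have hphit : ∀ n, phi (t n) = (t n, y) := by
    intro n
    have := hsin n
    rw [one_div] at this
    simp [phi, this]
  have htend : Tendsto (fun n => phi (t n)) atTop (nhds ((0 : ℝ), y)) := by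
    simp only [hphit]
    exact (htt.prodMk_nhds tendsto_const_nhds)
  exact mem_closure_of_tendsto htend hev

lemma graph_isCompact {a b : ℝ} (ha : 0 < a) : IsCompact (graphOn (Icc a b)) :=
  isCompact_Icc.image_of_continuousOn (phi_cont.mono fun x hx => lt_of_lt_of_le ha hx.1)

lemma graph_isConnected {a b : ℝ} (ha : 0 < a) (hab : a ≤ b) : IsConnected (graphOn (Icc a b)) :=
  (IsConnected.image ⟨nonempty_Icc.2 hab, isPreconnected_Icc⟩ _
    (phi_cont.mono fun x hx => lt_of_lt_of_le ha hx.1))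

lemma graph_Ioc_isConnected {v : ℝ} (hv : 0 < v) : IsConnected (graphOn (Ioc 0 v)) :=
  (IsConnected.image ⟨nonempty_Ioc.2 hv, isPreconnected_Ioc⟩ _
    (phi_cont.mono fun x hx => hx.1))

lemma S_eq_closure : S = closure (graphOn (Ioc 0 1)) := by
  apply Subset.antisymm
  · rw [S_eq_union]
    exact union_subset subset_closure (Vseg_sub_closure zero_lt_one)
  · intro p hp
    have h1 : p.1 ≤ 1 := closure_graph_le 1 hp
    have h0 : 0 ≤ p.1 := by
      have : closure (graphOn (Ioc 0 1)) ⊆ {q : ℝ × ℝ | 0 ≤ q.1} := by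
        apply closure_minimal _ (isClosed_le continuous_const continuous_fst)
        rintro q ⟨t, ht, rfl⟩
        exact le_of_lt ht.1
      exact this hp
    by_cases hpos : 0 < p.1
    · set ε := p.1 / 2 with hε
      have hε0 : 0 < ε := by positivity
      have hsplit : graphOn (Ioc 0 1) ⊆ graphOn (Ioc 0 ε) ∪ graphOn (Icc ε 1) := by
        rintro q ⟨t, ht, rfl⟩
        rcases le_or_gt t ε with h | h
        · exact Or.inl ⟨t, ⟨ht.1, h⟩, rfl⟩
        · exact Or.inr ⟨t, ⟨le_of_lt h, ht.2⟩, rfl⟩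
      have hcl : p ∈ closure (graphOn (Ioc 0 ε)) ∪ closure (graphOn (Icc ε 1)) := by
        have := closure_mono hsplit hp
        rwa [closure_union] at this
      rcases hcl with hcl | hcl
      · exact absurd (closure_graph_le ε hcl) (by simp only [hε, mem_setOf_eq, not_le]; linarith)
      · have : p ∈ graphOn (Icc ε 1) := by
          rwa [IsCompact.isClosed (graph_isCompact hε0) |>.closure_eq] at hcl
        rw [S_eq_union]
        obtain ⟨t, ht, rfl⟩ := this
        exact Or.inl ⟨t, ⟨lt_of_lt_of_le hε0 ht.1, ht.2⟩, rfl⟩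
    · have hp0 : p.1 = 0 := le_antisymm (not_lt.1 hpos) h0
      have hbd : closure (graphOn (Ioc 0 1)) ⊆ {q : ℝ × ℝ | -1 ≤ q.2 ∧ q.2 ≤ 1} := by
        apply closure_minimal _
          ((isClosed_le continuous_const continuous_snd).inter
            (isClosed_le continuous_snd continuous_const))
        rintro q ⟨t, ht, rfl⟩
        exact ⟨Real.neg_one_le_sin _, Real.sin_le_one _⟩
      rw [S_eq_union]
      exact Or.inr (mem_Vseg.2 ⟨hp0, (hbd hp).1, (hbd hp).2⟩)

lemma S_isCompact : IsCompact S := by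
  rw [S_eq_closure]
  apply IsCompact.of_isClosed_subset ((isCompact_Icc (a := (0:ℝ)) (b := 1)).prod
    (isCompact_Icc (a := (-1:ℝ)) (b := 1))) isClosed_closure
  apply closure_minimal _ ((isClosed_Icc).prod isClosed_Icc)
  rintro q ⟨t, ht, rfl⟩
  exact ⟨⟨le_of_lt ht.1, ht.2⟩, Real.neg_one_le_sin _, Real.sin_le_one _⟩

lemma S_isConnected : IsConnected S := by
  rw [S_eq_closure]
  exact (graph_Ioc_isConnected zero_lt_one).closure

/-- The set `E v = closure of the graph over (0, v]` equals `V ∪ graph(0,v]` as a continuum. -/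
lemma Ev_sub_S {v : ℝ} (hv0 : 0 < v) (hv1 : v ≤ 1) : closure (graphOn (Ioc 0 v)) ⊆ S := by
  rw [S_eq_closure]
  exact closure_mono (image_mono (Ioc_subset_Ioc_right hv1))

lemma Ev_isCompact {v : ℝ} (hv0 : 0 < v) (hv1 : v ≤ 1) :
    IsCompact (closure (graphOn (Ioc 0 v))) :=
  IsCompact.of_isClosed_subset S_isCompact isClosed_closure (Ev_sub_S hv0 hv1)

lemma Ev_isConnected {v : ℝ} (hv0 : 0 < v) : IsConnected (closure (graphOn (Ioc 0 v))) :=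
  (graph_Ioc_isConnected hv0).closure

lemma classify_graph {A : Set (ℝ × ℝ)} (hAS : A ⊆ S) (hc : IsCompact A)
    (hcon : IsConnected A) (h0 : ∀ p ∈ A, 0 < p.1) :
    ∃ a b, 0 < a ∧ a ≤ b ∧ b ≤ 1 ∧ A = graphOn (Icc a b) := by
  set J := Prod.fst '' A with hJdef
  have hJc : IsCompact J := hc.image continuous_fst
  have hJcon : IsConnected J := hcon.image _ continuous_fst.continuousOn
  have hJ : J = Icc (sInf J) (sSup J) := eq_Icc_of_connected_compact hJcon hJc
  have hab : sInf J ≤ sSup J := by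
    obtain ⟨x, hx⟩ := hJcon.nonempty
    rw [hJ] at hx
    exact le_trans hx.1 hx.2
  obtain ⟨p, hpA, hpa⟩ : sInf J ∈ J := hJc.sInf_mem hJcon.nonempty
  obtain ⟨q, hqA, hqb⟩ : sSup J ∈ J := hJc.sSup_mem hJcon.nonempty
  refine ⟨sInf J, sSup J, hpa ▸ h0 p hpA, hab, hqb ▸ S_fst_le_one (hAS hqA), ?_⟩
  ext r
  constructor
  · intro hr
    have h1 : r = phi r.1 := eq_phi_of_mem_S (hAS hr) (h0 r hr)
    have h2 : r.1 ∈ Icc (sInf J) (sSup J) := hJ ▸ (⟨r, hr, rfl⟩ : r.1 ∈ J)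
    have := Set.mem_image_of_mem phi h2
    rwa [← h1] at this
  · rintro ⟨x, hx, rfl⟩
    rw [← hJ] at hx
    obtain ⟨r, hrA, hrx⟩ := hx
    have : r = phi x := by rw [← hrx]; exact eq_phi_of_mem_S (hAS hrA) (hrx ▸ h0 r hrA)
    exact this ▸ hrA

lemma classify_V {A : Set (ℝ × ℝ)} (hAV : A ⊆ Vseg) (hc : IsCompact A)
    (hcon : IsConnected A) :
    ∃ p q, -1 ≤ p ∧ p ≤ q ∧ q ≤ 1 ∧ A = ({0} : Set ℝ) ×ˢ Icc p q := by
  set J := Prod.snd '' A with hJdef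
  have hJc : IsCompact J := hc.image continuous_snd
  have hJcon : IsConnected J := hcon.image _ continuous_snd.continuousOn
  have hJ : J = Icc (sInf J) (sSup J) := eq_Icc_of_connected_compact hJcon hJc
  have hab : sInf J ≤ sSup J := by
    obtain ⟨x, hx⟩ := hJcon.nonempty
    rw [hJ] at hx
    exact le_trans hx.1 hx.2
  obtain ⟨p, hpA, hpa⟩ : sInf J ∈ J := hJc.sInf_mem hJcon.nonempty
  obtain ⟨q, hqA, hqb⟩ : sSup J ∈ J := hJc.sSup_mem hJcon.nonempty
  refine ⟨sInf J, sSup J, hpa ▸ (mem_Vseg.1 (hAV hpA)).2.1,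
    hab, hqb ▸ (mem_Vseg.1 (hAV hqA)).2.2, ?_⟩
  ext r
  constructor
  · intro hr
    have h1 : r.1 = 0 := (mem_Vseg.1 (hAV hr)).1
    have h2 : r.2 ∈ Icc (sInf J) (sSup J) := hJ ▸ (⟨r, hr, rfl⟩ : r.2 ∈ J)
    exact ⟨h1, h2⟩
  · rintro ⟨h1, h2⟩
    rw [← hJ] at h2
    obtain ⟨s, hsA, hs2⟩ := h2
    have hs1 : s.1 = 0 := (mem_Vseg.1 (hAV hsA)).1
    have : s = r := Prod.ext (by rw [hs1, h1]) hs2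
    exact this ▸ hsA

/-- A subcontinuum of `S` containing a point on the limit segment and a point of the graph
contains the whole limit segment. -/
lemma Vseg_subset {A : Set (ℝ × ℝ)} (hAS : A ⊆ S) (hc : IsCompact A) (hcon : IsConnected A)
    {p q : ℝ × ℝ} (hpA : p ∈ A) (hp : p.1 = 0) (hqA : q ∈ A) (hq : 0 < q.1) :
    Vseg ⊆ A := by
  have hgr : graphOn (Ioc 0 q.1) ⊆ A := by
    rintro r ⟨x, hx, rfl⟩
    set J := Prod.fst '' A with hJdef
    have hJc : IsCompact J := hc.image continuous_fst
    have hJcon : IsConnected J := hcon.image _ continuous_fst.continuousOn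
    have hJ : J = Icc (sInf J) (sSup J) := eq_Icc_of_connected_compact hJcon hJc
    have hxJ : x ∈ J := by
      rw [hJ]
      constructor
      · have : sInf J ≤ p.1 := csInf_le hJc.bddBelow ⟨p, hpA, rfl⟩
        rw [hp] at this
        exact le_trans this (le_of_lt hx.1)
      · have : q.1 ≤ sSup J := le_csSup hJc.bddAbove ⟨q, hqA, rfl⟩
        exact le_trans hx.2 this
    obtain ⟨r, hrA, hrx⟩ := hxJ
    have : r = phi x := by rw [← hrx]; exact eq_phi_of_mem_S (hAS hrA) (hrx ▸ hx.1)
    exact this ▸ hrA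
  calc Vseg ⊆ closure (graphOn (Ioc 0 q.1)) := Vseg_sub_closure hq
    _ ⊆ closure A := closure_mono hgr
    _ = A := hc.isClosed.closure_eq

def GoodC (A B : Set (ℝ × ℝ)) : Prop :=
  ∃ C : Set (ℝ × ℝ), C ⊆ S ∧ IsCompact C ∧ IsConnected C ∧
    (A ∩ C).Nonempty ∧ (B ∩ C).Nonempty ∧ ((A ∪ B) \ C).Nonempty

lemma GoodC.symm {A B : Set (ℝ × ℝ)} (h : GoodC A B) : GoodC B A := by
  obtain ⟨C, h1, h2, h3, h4, h5, h6⟩ := h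
  exact ⟨C, h1, h2, h3, h5, h4, by rwa [union_comm]⟩

lemma phi_mem_graph {x : ℝ} {s : Set ℝ} (hx : x ∈ s) : phi x ∈ graphOn s :=
  Set.mem_image_of_mem phi hx

lemma phi_inj_mem {x : ℝ} {s : Set ℝ} (h : phi x ∈ graphOn s) : x ∈ s := by
  obtain ⟨y, hy, hxy⟩ := h
  have : y = x := congrArg Prod.fst hxy
  exact this ▸ hy

/-- Case: both continua are arcs on the graph, with the first to the left. -/
lemma helperGG {a1 b1 a2 b2 : ℝ} (h1 : 0 < a1) (h2 : a1 < b1) (h3 : b1 < a2)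
    (h4 : a2 < b2) (h5 : b2 ≤ 1) :
    GoodC (graphOn (Icc a1 b1)) (graphOn (Icc a2 b2)) := by
  refine ⟨graphOn (Icc b1 a2), ?_, graph_isCompact (h1.trans h2),
    graph_isConnected (h1.trans h2) (le_of_lt h3), ?_, ?_, ?_⟩
  · exact graph_sub_S fun x hx => ⟨lt_of_lt_of_le (h1.trans h2) hx.1,
      le_trans hx.2 (le_of_lt h4 |>.trans h5)⟩
  · exact ⟨phi b1, phi_mem_graph ⟨le_of_lt h2, le_refl _⟩,
      phi_mem_graph ⟨le_refl _, le_of_lt h3⟩⟩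
  · exact ⟨phi a2, phi_mem_graph ⟨le_refl _, le_of_lt h4⟩,
      phi_mem_graph ⟨le_of_lt h3, le_refl _⟩⟩
  · refine ⟨phi a1, Or.inl (phi_mem_graph ⟨le_refl _, le_of_lt h2⟩), fun hC => ?_⟩
    have := phi_inj_mem hC
    exact absurd this.1 (not_le.2 h2)

/-- Case: `A` is an arc on the graph, `B` contains a point on the limit segment. -/
lemma helperGV {A B : Set (ℝ × ℝ)} (hAS : A ⊆ S) (hBS : B ⊆ S)
    (hAc : IsCompact A) (hAcon : IsConnected A) (hAnt : A.Nontrivial)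
    (hA0 : ∀ p ∈ A, 0 < p.1) (hB0 : ∃ p ∈ B, p.1 = 0) : GoodC A B := by
  obtain ⟨a, b, ha, hab, hb1, hAeq⟩ := classify_graph hAS hAc hAcon hA0
  have hablt : a < b := by
    rcases lt_or_eq_of_le hab with h | h
    · exact h
    · exfalso
      subst h
      obtain ⟨x, hx, y, hy, hxy⟩ := hAnt
      rw [hAeq] at hx hy
      obtain ⟨u, hu, rfl⟩ := hx
      obtain ⟨v, hv, rfl⟩ := hy
      have hu' : u = a := le_antisymm hu.2 hu.1
      have hv' : v = a := le_antisymm hv.2 hv.1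
      exact hxy (by rw [hu', hv'])
  obtain ⟨p, hpB, hp0⟩ := hB0
  have hpV : p ∈ Vseg := mem_Vseg_of_mem_S (hBS hpB) hp0
  refine ⟨closure (graphOn (Ioc 0 a)), Ev_sub_S ha (le_trans hab hb1),
    Ev_isCompact ha (le_trans hab hb1), Ev_isConnected ha, ?_, ?_, ?_⟩
  · exact ⟨phi a, hAeq ▸ phi_mem_graph ⟨le_refl _, hab⟩,
      subset_closure (phi_mem_graph ⟨ha, le_refl _⟩)⟩
  · exact ⟨p, hpB, Vseg_sub_closure ha hpV⟩
  · refine ⟨phi b, Or.inl (hAeq ▸ phi_mem_graph ⟨hab, le_refl _⟩), fun hC => ?_⟩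
    have := closure_graph_le a hC
    simp only [mem_setOf_eq, phi_fst] at this
    exact absurd this (not_le.2 hablt)

/-- Case: both continua are segments on the limit segment, first below. -/
lemma helperVV {p1 q1 p2 q2 : ℝ} (h0 : -1 ≤ q1) (h1 : p1 < q1) (h2 : q1 < p2)
    (h3 : p2 < q2) (h4 : p2 ≤ 1) :
    GoodC (({0} : Set ℝ) ×ˢ Icc p1 q1) (({0} : Set ℝ) ×ˢ Icc p2 q2) := by
  refine ⟨({0} : Set ℝ) ×ˢ Icc q1 p2, ?_, isCompact_singleton.prod isCompact_Icc,
    (isConnected_singleton.prod ⟨nonempty_Icc.2 (le_of_lt h2), isPreconnected_Icc⟩), ?_, ?_, ?_⟩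
  · intro r hr
    apply Vseg_sub_S
    exact mem_Vseg.2 ⟨hr.1, le_trans h0 hr.2.1, le_trans hr.2.2 h4⟩
  · exact ⟨((0:ℝ), q1), ⟨rfl, le_of_lt h1, le_refl _⟩, ⟨rfl, le_refl _, le_of_lt h2⟩⟩
  · exact ⟨((0:ℝ), p2), ⟨rfl, le_refl _, le_of_lt h3⟩, ⟨rfl, le_of_lt h2, le_refl _⟩⟩
  · refine ⟨((0:ℝ), p1), Or.inl ⟨rfl, le_refl _, le_of_lt h1⟩, fun hC => ?_⟩
    exact absurd hC.2.1 (not_le.2 h1)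

lemma main_D {A B : Set (ℝ × ℝ)} (hAS : A ⊆ S) (hBS : B ⊆ S)
    (hAc : IsCompact A) (hAcon : IsConnected A) (hAnt : A.Nontrivial)
    (hBc : IsCompact B) (hBcon : IsConnected B) (hBnt : B.Nontrivial)
    (hdisj : Disjoint A B) : GoodC A B := by
  by_cases hA0 : ∃ p ∈ A, p.1 = 0
  · by_cases hB0 : ∃ p ∈ B, p.1 = 0
    · -- both meet the segment; then both are contained in it
      obtain ⟨pa, hpaA, hpa0⟩ := hA0
      obtain ⟨pb, hpbB, hpb0⟩ := hB0
      have hAV : A ⊆ Vseg := by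
        intro r hr
        by_cases h : 0 < r.1
        · exfalso
          have := Vseg_subset hAS hAc hAcon hpaA hpa0 hr h
          have hpbV : pb ∈ Vseg := mem_Vseg_of_mem_S (hBS hpbB) hpb0
          exact (disjoint_left.1 hdisj) (this hpbV) hpbB
        · exact mem_Vseg_of_mem_S (hAS hr)
            (le_antisymm (not_lt.1 h) (S_fst_nonneg (hAS hr)))
      have hBV : B ⊆ Vseg := by
        intro r hr
        by_cases h : 0 < r.1
        · exfalso
          have := Vseg_subset hBS hBc hBcon hpbB hpb0 hr h
          have hpaV : pa ∈ Vseg := mem_Vseg_of_mem_S (hAS hpaA) hpa0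
          exact (disjoint_left.1 hdisj) hpaA (this hpaV)
        · exact mem_Vseg_of_mem_S (hBS hr)
            (le_antisymm (not_lt.1 h) (S_fst_nonneg (hBS hr)))
      obtain ⟨p1, q1, hm1, hle1, hM1, hAeq⟩ := classify_V hAV hAc hAcon
      obtain ⟨p2, q2, hm2, hle2, hM2, hBeq⟩ := classify_V hBV hBc hBcon
      have hlt1 : p1 < q1 := by
        rcases lt_or_eq_of_le hle1 with h | h
        · exact h
        · exfalso; subst h
          obtain ⟨x, hx, y, hy, hxy⟩ := hAnt
          rw [hAeq] at hx hy
          exact hxy (Prod.ext (hx.1.trans hy.1.symm)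
            ((le_antisymm hx.2.2 hx.2.1).trans (le_antisymm hy.2.2 hy.2.1).symm))
      have hlt2 : p2 < q2 := by
        rcases lt_or_eq_of_le hle2 with h | h
        · exact h
        · exfalso; subst h
          obtain ⟨x, hx, y, hy, hxy⟩ := hBnt
          rw [hBeq] at hx hy
          exact hxy (Prod.ext (hx.1.trans hy.1.symm)
            ((le_antisymm hx.2.2 hx.2.1).trans (le_antisymm hy.2.2 hy.2.1).symm))
      have hIdisj : ∀ x, x ∈ Icc p1 q1 → x ∈ Icc p2 q2 → False := by
        intro x hx1 hx2
        rw [hAeq, hBeq] at hdisj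
        exact (disjoint_left.1 hdisj)
          (show ((0:ℝ), x) ∈ ({0} : Set ℝ) ×ˢ Icc p1 q1 from ⟨rfl, hx1⟩) ⟨rfl, hx2⟩
      rcases lt_or_ge q1 p2 with hord | hord
      · rw [hAeq, hBeq]
        exact helperVV (hm1.trans hle1) hlt1 hord hlt2 (hle2.trans hM2)
      · have hord2 : q2 < p1 := by
          by_contra hcon
          push_neg at hcon
          exact hIdisj (max p1 p2) ⟨le_max_left _ _, max_le (le_of_lt hlt1) hord⟩
            ⟨le_max_right _ _, max_le hcon (le_of_lt hlt2)⟩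
        rw [hAeq, hBeq]
        exact (helperVV (hm2.trans hle2) hlt2 hord2 hlt1 (hle1.trans hM1)).symm
    · -- B avoids the segment, A meets it
      push_neg at hB0
      have hB0' : ∀ p ∈ B, 0 < p.1 := fun p hp =>
        lt_of_le_of_ne (S_fst_nonneg (hBS hp)) (Ne.symm (hB0 p hp))
      exact (helperGV hBS hAS hBc hBcon hBnt hB0' hA0).symm
  · by_cases hB0 : ∃ p ∈ B, p.1 = 0
    · push_neg at hA0
      have hA0' : ∀ p ∈ A, 0 < p.1 := fun p hp =>
        lt_of_le_of_ne (S_fst_nonneg (hAS hp)) (Ne.symm (hA0 p hp))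
      exact helperGV hAS hBS hAc hAcon hAnt hA0' hB0
    · -- both are arcs on the graph
      push_neg at hA0 hB0
      have hA0' : ∀ p ∈ A, 0 < p.1 := fun p hp =>
        lt_of_le_of_ne (S_fst_nonneg (hAS hp)) (Ne.symm (hA0 p hp))
      have hB0' : ∀ p ∈ B, 0 < p.1 := fun p hp =>
        lt_of_le_of_ne (S_fst_nonneg (hBS hp)) (Ne.symm (hB0 p hp))
      obtain ⟨a1, b1, ha1, hle1, hb1, hAeq⟩ := classify_graph hAS hAc hAcon hA0'
      obtain ⟨a2, b2, ha2, hle2, hb2, hBeq⟩ := classify_graph hBS hBc hBcon hB0'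
      have hlt1 : a1 < b1 := by
        rcases lt_or_eq_of_le hle1 with h | h
        · exact h
        · exfalso; subst h
          obtain ⟨x, hx, y, hy, hxy⟩ := hAnt
          rw [hAeq] at hx hy
          obtain ⟨u, hu, rfl⟩ := hx
          obtain ⟨v, hv, rfl⟩ := hy
          exact hxy (by rw [le_antisymm hu.2 hu.1, le_antisymm hv.2 hv.1])
      have hlt2 : a2 < b2 := by
        rcases lt_or_eq_of_le hle2 with h | h
        · exact h
        · exfalso; subst h
          obtain ⟨x, hx, y, hy, hxy⟩ := hBnt
          rw [hBeq] at hx hy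
          obtain ⟨u, hu, rfl⟩ := hx
          obtain ⟨v, hv, rfl⟩ := hy
          exact hxy (by rw [le_antisymm hu.2 hu.1, le_antisymm hv.2 hv.1])
      have hIdisj : ∀ x, x ∈ Icc a1 b1 → x ∈ Icc a2 b2 → False := by
        intro x hx1 hx2
        rw [hAeq, hBeq] at hdisj
        exact (disjoint_left.1 hdisj) (phi_mem_graph hx1) (phi_mem_graph hx2)
      rcases lt_or_ge b1 a2 with hord | hord
      · rw [hAeq, hBeq]
        exact helperGG ha1 hlt1 hord hlt2 hb2
      · have hord2 : b2 < a1 := by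
          by_contra hcon
          push_neg at hcon
          exact hIdisj (max a1 a2) ⟨le_max_left _ _, max_le (le_of_lt hlt1) hord⟩
            ⟨le_max_right _ _, max_le hcon (le_of_lt hlt2)⟩
        rw [hAeq, hBeq]
        exact (helperGG ha2 hlt2 hord2 hlt1 hb1).symm

lemma val_image_preimage {t : Set (ℝ × ℝ)} (ht : t ⊆ S) :
    Subtype.val '' ((Subtype.val : ↥S → ℝ × ℝ) ⁻¹' t) = t := by
  rw [Subtype.image_preimage_coe]
  exact inter_eq_self_of_subset_right ht

lemma val_image_sub_S (s : Set ↥S) : Subtype.val '' s ⊆ S := by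
  rintro _ ⟨a, _, rfl⟩
  exact a.2

theorem S_DSpace : DSpace ↥S := by
  intro A B hAc hAcon hAnt hBc hBcon hBnt hdisj
  have hnt : ∀ s : Set ↥S, s.Nontrivial → (Subtype.val '' s).Nontrivial := by
    rintro s ⟨x, hx, y, hy, hxy⟩
    exact ⟨x, mem_image_of_mem _ hx, y, mem_image_of_mem _ hy,
      fun h => hxy (Subtype.coe_injective h)⟩
  obtain ⟨C', hCS, hCc, hCcon, h1, h2, h3⟩ :=
    main_D (val_image_sub_S A) (val_image_sub_S B)
      (hAc.image continuous_subtype_val) (hAcon.image _ continuous_subtype_val.continuousOn)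
      (hnt A hAnt)
      (hBc.image continuous_subtype_val) (hBcon.image _ continuous_subtype_val.continuousOn)
      (hnt B hBnt)
      ((Set.disjoint_image_iff Subtype.coe_injective).2 hdisj)
  have him : Subtype.val '' ((Subtype.val : ↥S → ℝ × ℝ) ⁻¹' C') = C' :=
    val_image_preimage hCS
  refine ⟨Subtype.val ⁻¹' C', ?_, ?_, ?_, ?_, ?_⟩
  · exact Subtype.isCompact_iff.2 (by rw [him]; exact hCc)
  · constructor
    · obtain ⟨p, hpA, hpC⟩ := h1
      obtain ⟨a, _, rfl⟩ := hpA
      exact ⟨a, hpC⟩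
    · exact Topology.IsInducing.subtypeVal.isPreconnected_image.1 (by rw [him]; exact hCcon.2)
  · obtain ⟨p, hpA, hpC⟩ := h1
    obtain ⟨a, ha, rfl⟩ := hpA
    exact ⟨a, ha, hpC⟩
  · obtain ⟨p, hpB, hpC⟩ := h2
    obtain ⟨b, hb, rfl⟩ := hpB
    exact ⟨b, hb, hpC⟩
  · obtain ⟨p, hpU, hpC⟩ := h3
    rcases hpU with hp | hp
    · obtain ⟨a, ha, rfl⟩ := hp
      exact ⟨a, Or.inl ha, hpC⟩
    · obtain ⟨b, hb, rfl⟩ := hp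
      exact ⟨b, Or.inr hb, hpC⟩

theorem S_not_DStarStar : ¬ DStarStarSpace ↥S := by
  intro h
  have hgsub : graphOn (Icc (2⁻¹ : ℝ) 1) ⊆ S :=
    graph_sub_S fun x hx => ⟨lt_of_lt_of_le (by norm_num) hx.1, hx.2⟩
  set A : Set ↥S := Subtype.val ⁻¹' graphOn (Icc (2⁻¹ : ℝ) 1) with hAdef
  set B : Set ↥S := Subtype.val ⁻¹' Vseg with hBdef
  have himA : Subtype.val '' A = graphOn (Icc (2⁻¹ : ℝ) 1) := val_image_preimage hgsub
  have himB : Subtype.val '' B = Vseg := val_image_preimage Vseg_sub_S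
  have hAc : IsCompact A := Subtype.isCompact_iff.2 (himA ▸ graph_isCompact (by norm_num))
  have hBc : IsCompact B :=
    Subtype.isCompact_iff.2 (himB ▸ isCompact_singleton.prod isCompact_Icc)
  have hAcon : IsConnected A := by
    constructor
    · exact ⟨⟨phi 2⁻¹, hgsub (phi_mem_graph ⟨le_refl _, by norm_num⟩)⟩,
        phi_mem_graph ⟨le_refl _, by norm_num⟩⟩
    · exact Topology.IsInducing.subtypeVal.isPreconnected_image.1
        (himA ▸ (graph_isConnected (by norm_num) (by norm_num)).2)
  have hBcon : IsConnected B := by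
    constructor
    · exact ⟨⟨((0:ℝ), 0), Vseg_sub_S (mem_Vseg.2 ⟨rfl, by norm_num, by norm_num⟩)⟩,
        mem_Vseg.2 ⟨rfl, by norm_num, by norm_num⟩⟩
    · exact Topology.IsInducing.subtypeVal.isPreconnected_image.1
        (himB ▸ (isConnected_singleton.prod
          ⟨nonempty_Icc.2 (by norm_num), isPreconnected_Icc⟩).2)
  have hAnt : A.Nontrivial := by
    refine ⟨⟨phi 2⁻¹, hgsub (phi_mem_graph ⟨le_refl _, by norm_num⟩)⟩,
      phi_mem_graph ⟨le_refl _, by norm_num⟩,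
      ⟨phi 1, hgsub (phi_mem_graph ⟨by norm_num, le_refl _⟩)⟩,
      phi_mem_graph ⟨by norm_num, le_refl _⟩, fun hc => ?_⟩
    have := congrArg (fun z : ↥S => (Subtype.val z).1) hc
    simp only [phi_fst] at this
    norm_num at this
  have hBnt : B.Nontrivial := by
    refine ⟨⟨((0:ℝ), -1), Vseg_sub_S (mem_Vseg.2 ⟨rfl, le_refl _, by norm_num⟩)⟩,
      mem_Vseg.2 ⟨rfl, le_refl _, by norm_num⟩,
      ⟨((0:ℝ), 1), Vseg_sub_S (mem_Vseg.2 ⟨rfl, by norm_num, le_refl _⟩)⟩,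
      mem_Vseg.2 ⟨rfl, by norm_num, le_refl _⟩, fun hc => ?_⟩
    have := congrArg (fun z : ↥S => (Subtype.val z).2) hc
    norm_num at this
  have hdisj : Disjoint A B := by
    apply Disjoint.preimage
    rw [disjoint_left]
    rintro p ⟨x, hx, rfl⟩ hpV
    have : (phi x).1 = 0 := (mem_Vseg.1 hpV).1
    rw [phi_fst] at this
    subst this
    exact absurd hx.1 (by norm_num)
  obtain ⟨C, hCc, hCcon, h1, h2, h3⟩ := h A B hAc hAcon hAnt hBc hBcon hBnt hdisj
  set C' := Subtype.val '' C with hC'def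
  have hCS : C' ⊆ S := val_image_sub_S C
  have hC'c : IsCompact C' := hCc.image continuous_subtype_val
  have hC'con : IsConnected C' := hCcon.image _ continuous_subtype_val.continuousOn
  obtain ⟨a, haA, haC⟩ := h1
  obtain ⟨b, hbB, hbC⟩ := h2
  have haG : (Subtype.val a) ∈ graphOn (Icc (2⁻¹ : ℝ) 1) := haA
  have hapos : 0 < (Subtype.val a).1 := by
    obtain ⟨x, hx, hxa⟩ := haG
    rw [← hxa, phi_fst]
    linarith [hx.1]
  have hb0 : (Subtype.val b).1 = 0 := (mem_Vseg.1 hbB).1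
  have hVsub : Vseg ⊆ C' :=
    Vseg_subset hCS hC'c hC'con (mem_image_of_mem _ hbC) hb0
      (mem_image_of_mem _ haC) hapos
  obtain ⟨d, hdB, hdC⟩ := h3
  have : Subtype.val d ∈ C' := hVsub hdB
  obtain ⟨c, hc, hcd⟩ := this
  exact hdC (Subtype.coe_injective hcd ▸ hc)

end SinAux

end SinOneOverXProof

/-- The `sin(1/x)`-continuum is a continuum which is a D-continuum but not a
D**-continuum. -/
theorem sinOneOverX_D_not_DStarStar :
    IsCompact sinOneOverXContinuum ∧ IsConnected sinOneOverXContinuum ∧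
      DSpace ↥sinOneOverXContinuum ∧ ¬ DStarStarSpace ↥sinOneOverXContinuum := by
  exact ⟨SinAux.S_isCompact, SinAux.S_isConnected, SinAux.S_DSpace, SinAux.S_not_DStarStar⟩
end

section
/- If X is an irreducible D**-continuum, then X contains no convergence continuum; that is, there is no nondegenerate subcontinuum C ⊆ X for which there exists a sequence (C_i) of subcontinua of X converging to C in the Hausdorff metric with C ∩ C_i = ∅ for every i. -/
/-- A continuum is *irreducible* if there are two points such that the only subcontinuum
containing both of them is the whole space. -/
def IrreducibleContinuum (X : Type*) [TopologicalSpace X] : Prop :=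
  ∃ a b : X, ∀ C : Set X, IsCompact C → IsConnected C → a ∈ C → b ∈ C → C = Set.univ

open Set Metric Filter

section Aux
variable {X : Type*}

/-- Boundary bumping: in a connected compact T2 space, the connected component of a point
in a proper closed subset meets the frontier of that subset. -/
lemma bumping' {Y : Type*} [TopologicalSpace Y] [CompactSpace Y] [T2Space Y] [ConnectedSpace Y]
    (E : Set Y) (hE : IsClosed E) (hEne : E ≠ univ) (x : Y) (hx : x ∈ E) :
    ∃ K : Set Y, K ⊆ E ∧ IsCompact K ∧ IsConnected K ∧ x ∈ K ∧ (K ∩ frontier E).Nonempty := by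
  haveI : CompactSpace E := isCompact_iff_compactSpace.mp (hE.isCompact)
  set p : E := ⟨x, hx⟩ with hp
  set K0 : Set E := connectedComponent p with hK0
  have hK0closed : IsClosed K0 := isClosed_connectedComponent
  have hK0compact : IsCompact K0 := hK0closed.isCompact
  have hK0conn : IsConnected K0 := isConnected_connectedComponent
  refine ⟨Subtype.val '' K0, ?_, ?_, ?_, ?_, ?_⟩
  · rintro y ⟨q, _, rfl⟩; exact q.2
  · exact hK0compact.image continuous_subtype_val
  · exact hK0conn.image _ continuous_subtype_val.continuousOn
  · exact ⟨p, mem_connectedComponent, rfl⟩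
  · by_contra hcon
    rw [not_nonempty_iff_eq_empty] at hcon
    set F : Set E := Subtype.val ⁻¹' (frontier E) with hF
    have hFclosed : IsClosed F := isClosed_frontier.preimage continuous_subtype_val
    have hFcompact : IsCompact F := hFclosed.isCompact
    have hK0F : K0 ∩ F = ∅ := by
      rw [eq_empty_iff_forall_notMem]
      rintro q ⟨hq1, hq2⟩
      have : (q : Y) ∈ Subtype.val '' K0 ∩ frontier E := ⟨⟨q, hq1, rfl⟩, hq2⟩
      rw [hcon] at this; exact this
    have hiInter := connectedComponent_eq_iInter_isClopen p
    have hFempty : F ∩ ⋂ (Z : {Z : Set E // IsClopen Z ∧ p ∈ Z}), (Z : Set E) = ∅ := by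
      rw [← hiInter, inter_comm]; exact hK0F
    obtain ⟨t, ht⟩ := hFcompact.elim_finite_subfamily_closed _
      (fun Z : {Z : Set E // IsClopen Z ∧ p ∈ Z} => Z.2.1.isClosed) hFempty
    set V : Set E := ⋂ Z ∈ t, (Z : Set E) with hV
    have hVclopen : IsClopen V := by
      apply Set.Finite.isClopen_biInter t.finite_toSet
      exact fun Z _ => Z.2.1
    have hpV : p ∈ V := by
      apply mem_biInter; intro Z _; exact Z.2.2
    have hVF : V ∩ F = ∅ := by rw [inter_comm]; exact ht
    set V' : Set Y := Subtype.val '' V with hV'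
    have hV'sub : V' ⊆ E := by rintro y ⟨q, _, rfl⟩; exact q.2
    have hV'closed : IsClosed V' :=
      (hVclopen.1.isCompact.image continuous_subtype_val).isClosed
    have hV'int : V' ⊆ interior E := by
      rintro y ⟨q, hq, rfl⟩
      have hyE : (q : Y) ∈ E := q.2
      have : (q : Y) ∉ frontier E := by
        intro hfr
        have : q ∈ V ∩ F := ⟨hq, hfr⟩
        rw [hVF] at this; exact this
      rw [hE.frontier_eq] at this
      simp only [mem_diff, not_and, not_not] at this
      exact this hyE
    have hV'open : IsOpen V' := by
      obtain ⟨O, hO, hOV⟩ := isOpen_induced_iff.mp hVclopen.2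
      have hV'eq : V' = O ∩ E := by
        ext y; constructor
        · rintro ⟨q, hq, rfl⟩
          rw [← hOV] at hq
          exact ⟨hq, q.2⟩
        · rintro ⟨hyO, hyE⟩
          refine ⟨⟨y, hyE⟩, ?_, rfl⟩
          rw [← hOV]; exact hyO
      have : V' = O ∩ interior E := by
        apply Subset.antisymm
        · exact subset_inter (hV'eq ▸ inter_subset_left) hV'int
        · intro y hy
          rw [hV'eq]; exact ⟨hy.1, interior_subset hy.2⟩
      rw [this]; exact hO.inter isOpen_interior
    have : V' = ∅ ∨ V' = univ := isClopen_iff.mp ⟨hV'closed, hV'open⟩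
    rcases this with h | h
    · rw [eq_empty_iff_forall_notMem] at h; exact h x ⟨p, hpV, rfl⟩
    · exact hEne (univ_subset_iff.mp (h ▸ hV'sub))

/-- Chunk lemma: inside a continuum `D`, around a point `z`, there is a subcontinuum contained
in the closed `ρ`-ball around `z` containing a point at distance exactly `ρ` from `z`. -/
lemma chunk' [MetricSpace X] (D : Set X) (hDc : IsCompact D) (hDconn : IsConnected D)
    (z : X) (hz : z ∈ D) (ρ : ℝ) (hρ : 0 < ρ) (hfar : ∃ y ∈ D, ρ < dist z y) :
    ∃ K : Set X, K ⊆ D ∧ IsCompact K ∧ IsConnected K ∧ z ∈ K ∧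
      (∀ w ∈ K, dist z w ≤ ρ) ∧ ∃ w ∈ K, dist z w = ρ := by
  haveI : CompactSpace D := isCompact_iff_compactSpace.mp hDc
  haveI : ConnectedSpace D := Subtype.connectedSpace hDconn
  set E : Set D := {p | dist z (p : X) ≤ ρ} with hE
  have hEclosed : IsClosed E := by
    have : Continuous fun p : D => dist z (p : X) :=
      (continuous_const.dist continuous_subtype_val)
    exact isClosed_le this continuous_const
  have hEne : E ≠ univ := by
    obtain ⟨y, hyD, hy⟩ := hfar
    intro h
    have : (⟨y, hyD⟩ : D) ∈ E := h ▸ mem_univ _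
    simp only [hE, mem_setOf_eq] at this
    linarith
  have hzE : (⟨z, hz⟩ : D) ∈ E := by simp [hE, hρ.le]
  obtain ⟨K0, hK0E, hK0c, hK0conn, hK0z, q, hqK0, hqfr⟩ := bumping' E hEclosed hEne _ hzE
  have hfrq : dist z (q : X) = ρ := by
    have h1 : dist z (q : X) ≤ ρ := hK0E hqK0
    by_contra hne
    have hlt : dist z (q : X) < ρ := lt_of_le_of_ne h1 hne
    have hopen : IsOpen {p : D | dist z (p : X) < ρ} :=
      isOpen_lt (continuous_const.dist continuous_subtype_val) continuous_const
    have hsub : {p : D | dist z (p : X) < ρ} ⊆ E := fun p hp => le_of_lt (α := ℝ) hp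
    have : q ∈ interior E := interior_maximal hsub hopen hlt
    rw [hEclosed.frontier_eq] at hqfr
    exact hqfr.2 this
  refine ⟨Subtype.val '' K0, ?_, hK0c.image continuous_subtype_val,
    hK0conn.image _ continuous_subtype_val.continuousOn, ⟨⟨z, hz⟩, hK0z, rfl⟩, ?_,
    ⟨q, ⟨q, hqK0, rfl⟩, hfrq⟩⟩
  · rintro y ⟨p, _, rfl⟩; exact p.2
  · rintro y ⟨p, hp, rfl⟩; exact hK0E hp

/-- A 5-chain of continua joining the irreducibility points covers the space. -/
lemma chain5 [TopologicalSpace X] {a b : X}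
    (hab : ∀ K : Set X, IsCompact K → IsConnected K → a ∈ K → b ∈ K → K = Set.univ)
    {P1 P2 P3 P4 P5 : Set X}
    (k1 : IsCompact P1) (k2 : IsCompact P2) (k3 : IsCompact P3) (k4 : IsCompact P4)
    (k5 : IsCompact P5)
    (n1 : IsConnected P1) (n2 : IsConnected P2) (n3 : IsConnected P3) (n4 : IsConnected P4)
    (n5 : IsConnected P5)
    (g1 : (P1 ∩ P2).Nonempty) (g2 : (P2 ∩ P3).Nonempty) (g3 : (P3 ∩ P4).Nonempty)
    (g4 : (P4 ∩ P5).Nonempty)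
    (ha : a ∈ P1) (hb : b ∈ P5) :
    P1 ∪ (P2 ∪ (P3 ∪ (P4 ∪ P5))) = Set.univ := by
  have c45 : IsConnected (P4 ∪ P5) := IsConnected.union g4 n4 n5
  have c345 : IsConnected (P3 ∪ (P4 ∪ P5)) :=
    IsConnected.union (g3.mono (inter_subset_inter subset_rfl subset_union_left)) n3 c45
  have c2345 : IsConnected (P2 ∪ (P3 ∪ (P4 ∪ P5))) :=
    IsConnected.union (g2.mono (inter_subset_inter subset_rfl subset_union_left)) n2 c345
  have call : IsConnected (P1 ∪ (P2 ∪ (P3 ∪ (P4 ∪ P5)))) :=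
    IsConnected.union (g1.mono (inter_subset_inter subset_rfl subset_union_left)) n1 c2345
  exact hab _ (k1.union (k2.union (k3.union (k4.union k5)))) call
    (mem_union_left _ ha)
    (mem_union_right _ (mem_union_right _ (mem_union_right _ (mem_union_right _ hb))))

end Aux

/-- An irreducible D**-continuum contains no convergence continuum: there is no
nondegenerate subcontinuum `C` together with a sequence of subcontinua `Cᵢ` disjoint
from `C` converging to `C` in the Hausdorff metric. -/
theorem irreducible_dStarStar_no_convergence_continuum (X : Type*) [MetricSpace X]
    [CompactSpace X] [ConnectedSpace X]
    (hirr : IrreducibleContinuum X) (hdss : DStarStarSpace X) :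
    ¬ ∃ C : Set X, IsCompact C ∧ IsConnected C ∧ C.Nontrivial ∧
      ∃ Ci : ℕ → Set X,
        (∀ i, IsCompact (Ci i) ∧ IsConnected (Ci i) ∧ Disjoint C (Ci i)) ∧
        Filter.Tendsto (fun i => Metric.hausdorffDist (Ci i) C) Filter.atTop (nhds 0) := by
  rintro ⟨C, hCcomp, hCconn, hCnt, Ci, hCi, htend⟩
  obtain ⟨a, b, hab⟩ := hirr
  -- Basic facts
  have hCne : C.Nonempty := hCconn.nonempty
  have hCine : ∀ i, (Ci i).Nonempty := fun i => (hCi i).2.1.nonempty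
  have hCclosed : IsClosed C := hCcomp.isClosed
  have hdisj : ∀ i, Disjoint C (Ci i) := fun i => (hCi i).2.2
  set h : ℕ → ℝ := fun i => hausdorffDist (Ci i) C with hdef
  have hfin : ∀ i, EMetric.hausdorffEdist (Ci i) C ≠ ⊤ := fun i =>
    hausdorffEdist_ne_top_of_nonempty_of_bounded (hCine i) hCne ((hCi i).1.isBounded)
      hCcomp.isBounded
  have hCtoCi : ∀ i, ∀ y ∈ C, infDist y (Ci i) ≤ h i := by
    intro i y hy
    have h1 := infDist_le_hausdorffDist_of_mem hy
      (by rw [EMetric.hausdorffEdist_comm]; exact hfin i)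
    rwa [hausdorffDist_comm] at h1
  have hCitoC : ∀ i, ∀ x ∈ Ci i, infDist x C ≤ h i := fun i x hx =>
    infDist_le_hausdorffDist_of_mem hx (hfin i)
  have hsmall : ∀ ε : ℝ, 0 < ε → ∃ N, ∀ i, N ≤ i → h i < ε := by
    intro ε hε
    obtain ⟨N, hN⟩ := (Metric.tendsto_atTop).mp htend ε hε
    refine ⟨N, fun i hi => ?_⟩
    have := hN i hi
    rw [Real.dist_eq, sub_zero] at this
    exact lt_of_le_of_lt (le_abs_self _) this
  -- Tail lemma: a closed set containing Ci i for arbitrarily large i contains C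
  have tailU : ∀ S : Set X, IsClosed S → (∀ N, ∃ i, N ≤ i ∧ Ci i ⊆ S) → C ⊆ S := by
    intro S hS hmany y hy
    rw [← hS.closure_eq, Metric.mem_closure_iff]
    intro ε hε
    obtain ⟨N, hN⟩ := hsmall ε hε
    obtain ⟨i, hiN, hiS⟩ := hmany N
    have h2 : infDist y (Ci i) < ε := lt_of_le_of_lt (hCtoCi i y hy) (hN i hiN)
    obtain ⟨x, hxCi, hxd⟩ := (infDist_lt_iff (hCine i)).mp h2
    exact ⟨x, hiS hxCi, hxd⟩
  -- not both a and b in C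
  have hnotboth : ¬(a ∈ C ∧ b ∈ C) := by
    rintro ⟨ha, hb⟩
    have hCuniv := hab C hCcomp hCconn ha hb
    obtain ⟨x, hx⟩ := hCine 0
    exact (disjoint_right.mp (hdisj 0) hx) (hCuniv ▸ mem_univ x)
  -- chunk construction at a point off C
  have mkK : ∀ w v : X, w ∉ C → w ≠ v →
      ∃ (K : Set X) (ρ : ℝ), 0 < ρ ∧ 4*ρ ≤ infDist w C ∧ 4*ρ ≤ dist w v ∧
        IsCompact K ∧ IsConnected K ∧ K.Nontrivial ∧ w ∈ K ∧
        (∀ x ∈ K, dist w x ≤ ρ) ∧ Disjoint K C := by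
    intro w v hwC hwv
    have hiw : 0 < infDist w C := (hCclosed.notMem_iff_infDist_pos hCne).mp hwC
    have hdwv : 0 < dist w v := dist_pos.mpr hwv
    set ρ := min (infDist w C) (dist w v) / 4 with hρdef
    have hρ : 0 < ρ := by
      rw [hρdef]; have := lt_min hiw hdwv; linarith
    have h4a : 4*ρ ≤ infDist w C := by
      rw [hρdef]; have := min_le_left (infDist w C) (dist w v); linarith
    have h4b : 4*ρ ≤ dist w v := by
      rw [hρdef]; have := min_le_right (infDist w C) (dist w v); linarith
    obtain ⟨K, hKsub, hKc, hKconn, hwK, hKball, x0, hx0K, hx0d⟩ :=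
      chunk' univ isCompact_univ isConnected_univ w (mem_univ w) ρ hρ
        ⟨v, mem_univ v, by linarith⟩
    refine ⟨K, ρ, hρ, h4a, h4b, hKc, hKconn,
      ⟨w, hwK, x0, hx0K, fun hh => by rw [← hh, dist_self] at hx0d; linarith⟩, hwK, hKball, ?_⟩
    rw [disjoint_left]
    intro x hxK hxC
    have h1 : infDist w C ≤ dist w x := infDist_le_dist_of_mem hxC
    have h2 : dist w x ≤ ρ := hKball x hxK
    linarith
  -- chunks stay away from Ci i for large i
  have hKCi : ∀ (K : Set X) (w : X) (ρ : ℝ), (∀ x ∈ K, dist w x ≤ ρ) →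
      4*ρ ≤ infDist w C → ∀ i, h i < 3*ρ → ∀ x ∈ Ci i, x ∉ K := by
    intro K w ρ hball h4 i hi x hxCi hxK
    have h2 : infDist x C < 3*ρ := lt_of_le_of_lt (hCitoC i x hxCi) hi
    obtain ⟨c', hc'C, hc'd⟩ := (infDist_lt_iff hCne).mp h2
    have h3 : infDist w C ≤ dist w c' := infDist_le_dist_of_mem hc'C
    have h5 : dist w c' ≤ dist w x + dist x c' := dist_triangle _ _ _
    have h6 : dist w x ≤ ρ := hball x hxK
    linarith
  -- CASE 1 : one endpoint in C, the other not
  have case1 : ∀ w v : X,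
      (∀ K : Set X, IsCompact K → IsConnected K → w ∈ K → v ∈ K → K = Set.univ) →
      w ∉ C → v ∈ C → False := by
    intro w v hirr' hwC hvC
    have hwv : w ≠ v := fun hh => hwC (hh ▸ hvC)
    obtain ⟨K, ρ, hρ, h4a, h4b, hKc, hKconn, hKnt, hwK, hKball, hKC⟩ := mkK w v hwC hwv
    obtain ⟨E, hEc, hEconn, hEK, hEC, c, hcC, hcE⟩ :=
      hdss K C hKc hKconn hKnt hCcomp hCconn hCnt hKC
    have hW := chain5 hirr' hKc hEc hCcomp hCcomp hCcomp hKconn hEconn hCconn hCconn hCconn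
      hEK (by rwa [inter_comm] at hEC) (by rw [inter_self]; exact hCne)
      (by rw [inter_self]; exact hCne) hwK hvC
    have hsub : ∀ i, Ci i ⊆ K ∪ E := by
      intro i x hx
      have hx' : x ∈ (univ : Set X) := mem_univ x
      rw [← hW] at hx'
      have hxC : x ∉ C := fun hc => disjoint_left.mp (hdisj i) hc hx
      rcases hx' with h1 | h1 | h1 | h1 | h1
      · exact Or.inl h1
      · exact Or.inr h1
      · exact absurd h1 hxC
      · exact absurd h1 hxC
      · exact absurd h1 hxC
    have hCsub := tailU (K ∪ E) ((hKc.union hEc).isClosed) (fun N => ⟨N, le_rfl, hsub N⟩)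
    rcases hCsub hcC with h1 | h1
    · exact disjoint_right.mp hKC hcC h1
    · exact hcE h1
  by_cases haC : a ∈ C
  · have hbC : b ∉ C := fun hb => hnotboth ⟨haC, hb⟩
    exact case1 b a (fun K kc kn hbK haK => hab K kc kn haK hbK) hbC haC
  · by_cases hbC : b ∈ C
    · exact case1 a b hab haC hbC
    · -- CASE 2 : both endpoints off C
      have hanb : a ≠ b := by
        intro hh
        have huniv := hab {a} isCompact_singleton isConnected_singleton rfl
          (mem_singleton_iff.mpr hh.symm)
        obtain ⟨x, hx, y, hy, hxy⟩ := hCnt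
        have hx2 : x ∈ ({a} : Set X) := by rw [huniv]; exact mem_univ x
        have hy2 : y ∈ ({a} : Set X) := by rw [huniv]; exact mem_univ y
        exact hxy ((mem_singleton_iff.mp hx2).trans (mem_singleton_iff.mp hy2).symm)
      obtain ⟨Ka, ρa, hρa, h4aC, h4ab, hKac, hKaconn, hKant, haKa, hKaball, hKaC⟩ :=
        mkK a b haC hanb
      obtain ⟨Kb, ρb, hρb, h4bC, h4ba, hKbc, hKbconn, hKbnt, hbKb, hKbball, hKbC⟩ :=
        mkK b a hbC (Ne.symm hanb)
      obtain ⟨Ea, hEac, hEaconn, hEaKa, hEaC, ca, hcaC, hcaEa⟩ :=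
        hdss Ka C hKac hKaconn hKant hCcomp hCconn hCnt hKaC
      obtain ⟨Eb, hEbc, hEbconn, hEbKb, hEbC, cb, hcbC, hcbEb⟩ :=
        hdss Kb C hKbc hKbconn hKbnt hCcomp hCconn hCnt hKbC
      obtain ⟨p, hpC, q, hqC, hpq⟩ := hCnt
      have hτ : 0 < dist p q / 2 := by have := dist_pos.mpr hpq; linarith
      obtain ⟨N0, hN0⟩ := hsmall (min (3*ρa) (min (3*ρb) (dist p q / 2)))
        (lt_min (by linarith) (lt_min (by linarith) hτ))
      have hnotEa : ∃ Na, ∀ i, Na ≤ i → ¬ Ci i ⊆ Ea := by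
        by_contra hcon
        push_neg at hcon
        exact hcaEa (tailU Ea hEac.isClosed hcon hcaC)
      have hnotEb : ∃ Nb, ∀ i, Nb ≤ i → ¬ Ci i ⊆ Eb := by
        by_contra hcon
        push_neg at hcon
        exact hcbEb (tailU Eb hEbc.isClosed hcon hcbC)
      obtain ⟨Na, hNa⟩ := hnotEa
      obtain ⟨Nb, hNb⟩ := hnotEb
      set I := max N0 (max Na Nb) with hIdef
      have hhI := hN0 I (le_max_left _ _)
      have hI1 : h I < 3*ρa := lt_of_lt_of_le hhI (min_le_left _ _)
      have hI2 : h I < 3*ρb :=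
        lt_of_lt_of_le hhI (le_trans (min_le_right _ _) (min_le_left _ _))
      have hI3 : h I < dist p q / 2 :=
        lt_of_lt_of_le hhI (le_trans (min_le_right _ _) (min_le_right _ _))
      have hIa : ¬ Ci I ⊆ Ea := hNa I (le_trans (le_max_left _ _) (le_max_right _ _))
      have hIb : ¬ Ci I ⊆ Eb := hNb I (le_trans (le_max_right _ _) (le_max_right _ _))
      have hKaCiI : ∀ x ∈ Ci I, x ∉ Ka := hKCi Ka a ρa hKaball h4aC I hI1
      have hKbCiI : ∀ x ∈ Ci I, x ∉ Kb := hKCi Kb b ρb hKbball h4bC I hI2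
      have hCiInt : (Ci I).Nontrivial := by
        have h1 : infDist p (Ci I) < dist p q / 2 := lt_of_le_of_lt (hCtoCi I p hpC) hI3
        have h2 : infDist q (Ci I) < dist p q / 2 := lt_of_le_of_lt (hCtoCi I q hqC) hI3
        obtain ⟨x, hx, hxd⟩ := (infDist_lt_iff (hCine I)).mp h1
        obtain ⟨y, hy, hyd⟩ := (infDist_lt_iff (hCine I)).mp h2
        refine ⟨x, hx, y, hy, fun hh => ?_⟩
        rw [hh] at hxd
        have htri := dist_triangle p y q
        rw [dist_comm y q] at htri
        linarith
      have hW := chain5 hab hKac hEac hCcomp hEbc hKbc hKaconn hEaconn hCconn hEbconn hKbconn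
        hEaKa (by rwa [inter_comm] at hEaC) hEbC (by rwa [inter_comm] at hEbKb) haKa hbKb
      have hCiEaEb : Ci I ⊆ Ea ∪ Eb := by
        intro x hx
        have hx' : x ∈ (univ : Set X) := mem_univ x
        rw [← hW] at hx'
        have hxC : x ∉ C := fun hc => disjoint_left.mp (hdisj I) hc hx
        rcases hx' with h1 | h1 | h1 | h1 | h1
        · exact absurd h1 (hKaCiI x hx)
        · exact Or.inl h1
        · exact absurd h1 hxC
        · exact Or.inr h1
        · exact absurd h1 (hKbCiI x hx)
      have hCiEb : ((Ci I) ∩ Eb).Nonempty := by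
        obtain ⟨x, hx, hxEa⟩ := not_subset.mp hIa
        rcases hCiEaEb hx with h1 | h1
        · exact absurd h1 hxEa
        · exact ⟨x, hx, h1⟩
      have hCiEa : ((Ci I) ∩ Ea).Nonempty := by
        obtain ⟨x, hx, hxEb⟩ := not_subset.mp hIb
        rcases hCiEaEb hx with h1 | h1
        · exact ⟨x, hx, h1⟩
        · exact absurd h1 hxEb
      have hKaCiI' : Disjoint Ka (Ci I) := disjoint_right.mpr hKaCiI
      obtain ⟨E, hEc, hEconn, hEKa, hECi, z, hzCi, hzE⟩ :=
        hdss Ka (Ci I) hKac hKaconn hKant (hCi I).1 (hCi I).2.1 hCiInt hKaCiI'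
      have hW1 := chain5 hab hKac hEc (hCi I).1 hEbc hKbc hKaconn hEconn (hCi I).2.1
        hEbconn hKbconn hEKa (by rwa [inter_comm] at hECi) hCiEb
        (by rwa [inter_comm] at hEbKb) haKa hbKb
      have hcbE : cb ∈ E := by
        have hx' : cb ∈ (univ : Set X) := mem_univ cb
        rw [← hW1] at hx'
        rcases hx' with h1 | h1 | h1 | h1 | h1
        · exact absurd h1 (disjoint_right.mp hKaC hcbC)
        · exact h1
        · exact absurd h1 (disjoint_left.mp (hdisj I) hcbC)
        · exact absurd h1 hcbEb
        · exact absurd h1 (disjoint_right.mp hKbC hcbC)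
      have hEne : E.Nonempty := hEKa.mono inter_subset_right
      have hzEpos : 0 < infDist z E := (hEc.isClosed.notMem_iff_infDist_pos hEne).mp hzE
      obtain ⟨u, hu, v, hv, huv⟩ := hCiInt
      have hτ2 : 0 < dist u v := dist_pos.mpr huv
      set ρz := min (infDist z E) (dist u v / 2) / 2 with hρz
      have hρzpos : 0 < ρz := by
        rw [hρz]
        have := lt_min hzEpos (by linarith : (0:ℝ) < dist u v / 2)
        linarith
      have hfarz : ∃ y ∈ Ci I, ρz < dist z y := by
        have hρzlt : ρz < dist u v / 2 := by
          rw [hρz]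
          have h1 := min_le_right (infDist z E) (dist u v / 2)
          linarith
        by_cases hc : dist u v / 2 ≤ dist z u
        · exact ⟨u, hu, lt_of_lt_of_le hρzlt hc⟩
        · push_neg at hc
          have hzv : dist u v / 2 ≤ dist z v := by
            have htri := dist_triangle u z v
            rw [dist_comm u z] at htri
            linarith
          exact ⟨v, hv, lt_of_lt_of_le hρzlt hzv⟩
      obtain ⟨Bz, hBzsub, hBzc, hBzconn, hzBz, hBzball, w0, hw0Bz, hw0d⟩ :=
        chunk' (Ci I) (hCi I).1 (hCi I).2.1 z hzCi ρz hρzpos hfarz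
      have hBznt : Bz.Nontrivial :=
        ⟨z, hzBz, w0, hw0Bz, fun hh => by rw [← hh, dist_self] at hw0d; linarith⟩
      have hBzE : ∀ x ∈ Bz, x ∉ E := by
        intro x hx hxE
        have h1 : infDist z E ≤ dist z x := infDist_le_dist_of_mem hxE
        have h2 : dist z x ≤ ρz := hBzball x hx
        rw [hρz] at h2
        have := min_le_left (infDist z E) (dist u v / 2)
        linarith
      have hKbBz : Disjoint Kb Bz := disjoint_right.mpr (fun x hx => hKbCiI x (hBzsub hx))
      obtain ⟨F, hFc, hFconn, hFKb, hFBz, z', hz'Bz, hz'F⟩ :=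
        hdss Kb Bz hKbc hKbconn hKbnt hBzc hBzconn hBznt hKbBz
      have hba : ∀ K : Set X, IsCompact K → IsConnected K → b ∈ K → a ∈ K → K = Set.univ :=
        fun K kc kn h1 h2 => hab K kc kn h2 h1
      have hFCi : (F ∩ Ci I).Nonempty := by
        obtain ⟨x, hx1, hx2⟩ := hFBz
        exact ⟨x, hx2, hBzsub hx1⟩
      have hW2 := chain5 hba hKbc hFc (hCi I).1 hEac hKac hKbconn hFconn (hCi I).2.1
        hEaconn hKaconn hFKb hFCi hCiEa (by rwa [inter_comm] at hEaKa) hbKb haKa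
      have hcaF : ca ∈ F := by
        have hx' : ca ∈ (univ : Set X) := mem_univ ca
        rw [← hW2] at hx'
        rcases hx' with h1 | h1 | h1 | h1 | h1
        · exact absurd h1 (disjoint_right.mp hKbC hcaC)
        · exact h1
        · exact absurd h1 (disjoint_left.mp (hdisj I) hcaC)
        · exact absurd h1 hcaEa
        · exact absurd h1 (disjoint_right.mp hKaC hcaC)
      have hEC' : (E ∩ C).Nonempty := ⟨cb, hcbE, hcbC⟩
      have hCF : (C ∩ F).Nonempty := ⟨ca, hcaC, hcaF⟩
      have hW3 := chain5 hab hKac hEc hCcomp hFc hKbc hKaconn hEconn hCconn hFconn hKbconn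
        hEKa hEC' hCF (by rwa [inter_comm] at hFKb) haKa hbKb
      have hz'univ : z' ∈ (univ : Set X) := mem_univ z'
      rw [← hW3] at hz'univ
      have hz'Ci : z' ∈ Ci I := hBzsub hz'Bz
      rcases hz'univ with h1 | h1 | h1 | h1 | h1
      · exact hKaCiI z' hz'Ci h1
      · exact hBzE z' hz'Bz h1
      · exact disjoint_left.mp (hdisj I) h1 hz'Ci
      · exact hz'F h1
      · exact hKbCiI z' hz'Ci h1
end

section
/- For a nondegenerate continuum X, the following are equivalent: (1) every nondegenerate subcontinuum of X is a Wilder continuum; (2) every nondegenerate subcontinuum of X is a D*-continuum; (3) every nondegenerate subcontinuum of X is a D**-continuum; (4) every subcontinuum of X is arcwise connected. -/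
/-- A topological space is a *D*-space* if for every pair of disjoint nondegenerate
subcontinua `A, B` there is a subcontinuum `C` meeting both `A` and `B` with
`A \ C ≠ ∅` and `B \ C ≠ ∅`. -/
def DStarSpace (X : Type*) [TopologicalSpace X] : Prop :=
  ∀ A B : Set X, IsCompact A → IsConnected A → A.Nontrivial →
    IsCompact B → IsConnected B → B.Nontrivial → Disjoint A B →
    ∃ C : Set X, IsCompact C ∧ IsConnected C ∧
      (A ∩ C).Nonempty ∧ (B ∩ C).Nonempty ∧ (A \ C).Nonempty ∧ (B \ C).Nonempty

/-- A space is *arcwise connected* if any two distinct points are joined by an arc, i.e.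
an injective continuous image of `[0,1]` with the two points as endpoints. -/
def ArcConnectedSpace (X : Type*) [TopologicalSpace X] : Prop :=
  ∀ x y : X, x ≠ y →
    ∃ f : Set.Icc (0 : ℝ) 1 → X, Continuous f ∧ Function.Injective f ∧
      f ⟨0, le_refl 0, zero_le_one⟩ = x ∧ f ⟨1, zero_le_one, le_refl 1⟩ = y

/-!
The implications (4) ⇒ (1), (4) ⇒ (2), (1) ⇒ (3) and (2) ⇒ (3) are elementary.

For (3) ⇒ (4), let `M` be a subcontinuum irreducible between two given points `x ≠ y`. If a
continuum `W` is irreducible from `u` to `q`, boundary bumping and D** give, for every `ε > 0`, a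
proper subcontinuum of `W` through `u` containing everything outside the `ε`-ball around `q`; hence
`W` is irreducible from `u` to no other point. This makes "every subcontinuum of `M` through `x` and
`b` contains `a`" a linear order on `M` whose closed rays are closed. A compact connected separable
space with such an order and two endpoints is an arc: a countable order-dense subset is
order-isomorphic to `ℚ ∩ (0, 1)`, and extending this by suprema gives a homeomorphism onto `[0, 1]`.
-/

open Set Metric Topology

section ExtendBySup

variable {T : Type*} [LinearOrder T] {D : Set T} {g : D → ℝ}

noncomputable def extendBySup (g : D → ℝ) (p : T) : ℝ :=
  sSup (g '' {d | (d : T) ≤ p})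

theorem le_extendBySup (hg01 : ∀ d, g d ∈ Ioo 0 1) {d : D} {p : T} (h : (d : T) ≤ p) :
    g d ≤ extendBySup g p :=
  le_csSup ⟨1, by rintro _ ⟨d', -, rfl⟩; exact (hg01 d').2.le⟩ ⟨d, h, rfl⟩

theorem extendBySup_le (hg : StrictMono g) (hg01 : ∀ d, g d ∈ Ioo 0 1) {d : D} {p : T}
    (h : p ≤ (d : T)) : extendBySup g p ≤ g d :=
  Real.sSup_le (by rintro _ ⟨d', hd', rfl⟩; exact hg.monotone (hd'.trans h)) (hg01 d).1.le

theorem extendBySup_mem_Icc (hg01 : ∀ d, g d ∈ Ioo 0 1) (p : T) : extendBySup g p ∈ Icc 0 1 :=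
  ⟨Real.sSup_nonneg (by rintro _ ⟨d, -, rfl⟩; exact (hg01 d).1.le),
    Real.sSup_le (by rintro _ ⟨d, -, rfl⟩; exact (hg01 d).2.le) zero_le_one⟩

theorem strictMono_extendBySup (hD : ∀ a b, a < b → ∃ d : D, (d : T) ∈ Ioo a b)
    (hg : StrictMono g) (hg01 : ∀ d, g d ∈ Ioo 0 1) : StrictMono (extendBySup g) := by
  intro a b hab
  obtain ⟨d₁, had₁, hd₁b⟩ := hD a b hab
  obtain ⟨d₂, hd₁d₂, hd₂b⟩ := hD d₁ b hd₁b
  calc extendBySup g a ≤ g d₁ := extendBySup_le hg hg01 had₁.le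
    _ < g d₂ := hg (Subtype.coe_lt_coe.1 hd₁d₂)
    _ ≤ extendBySup g b := le_extendBySup hg01 hd₂b.le

end ExtendBySup

theorem exists_strictMono_forall_exists_mem_Ioo {S : Type*} [LinearOrder S] [Countable S]
    [DenselyOrdered S] [NoMinOrder S] [NoMaxOrder S] [Nonempty S] :
    ∃ g : S → ℝ, StrictMono g ∧ (∀ d, g d ∈ Ioo 0 1) ∧
      ∀ ⦃s t : ℝ⦄, 0 ≤ s → s < t → t ≤ 1 → ∃ d, g d ∈ Ioo s t := by
  have : Nonempty (Ioo (0 : ℚ) 1) := ⟨⟨1 / 2, by norm_num, by norm_num⟩⟩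
  obtain ⟨e⟩ := Order.iso_of_countable_dense S (Ioo (0 : ℚ) 1)
  refine ⟨fun d => ((e d : ℚ) : ℝ), fun a b h => Rat.cast_lt.2 (e.strictMono h),
    fun d => ⟨Rat.cast_pos.2 (e d).2.1, by simpa using (Rat.cast_lt (K := ℝ)).2 (e d).2.2⟩,
    fun s t hs hst ht => ?_⟩
  obtain ⟨r, hsr, hrt⟩ := exists_rat_btwn hst
  have hr : r ∈ Ioo (0 : ℚ) 1 :=
    ⟨by exact_mod_cast hs.trans_lt hsr, by exact_mod_cast hrt.trans_le ht⟩
  exact ⟨e.symm ⟨r, hr⟩, by simpa using hsr, by simpa using hrt⟩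

section OrderArc

variable {T : Type*} [TopologicalSpace T] [LinearOrder T]

theorem denselyOrdered_of_isClosed_Iic_Ici [ConnectedSpace T]
    (hIic : ∀ b : T, IsClosed (Iic b)) (hIci : ∀ b : T, IsClosed (Ici b)) : DenselyOrdered T where
  dense a b hab := by
    by_contra! h
    have hgap : Iic a = (Ici b)ᶜ := by
      ext z
      simp only [mem_Iic, mem_compl_iff, mem_Ici, not_le]
      exact ⟨fun hz => hz.trans_lt hab, fun hz => not_lt.1 fun haz => (h z haz).not_gt hz⟩
    have hclopen : IsClopen (Iic a) := ⟨hIic a, hgap ▸ (hIci b).isOpen_compl⟩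
    exact hab.not_ge ((hclopen.eq_univ ⟨a, le_rfl⟩).symm ▸ mem_univ b : b ∈ Iic a)

/-- `D` avoids the endpoints `x` and `y`, so that it has no least and no greatest element. -/
theorem exists_orderDense_strictMono [TopologicalSpace.SeparableSpace T] [DenselyOrdered T]
    (hIic : ∀ b : T, IsClosed (Iic b)) (hIci : ∀ b : T, IsClosed (Ici b)) {x y : T}
    (hx : ∀ z, x ≤ z) (hy : ∀ z, z ≤ y) (hxy : x < y) :
    ∃ D ⊆ Ioo x y, (∀ a b, a < b → ∃ d : D, (d : T) ∈ Ioo a b) ∧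
      ∃ g : D → ℝ, StrictMono g ∧ (∀ d, g d ∈ Ioo 0 1) ∧
        ∀ ⦃s t : ℝ⦄, 0 ≤ s → s < t → t ≤ 1 → ∃ d, g d ∈ Ioo s t := by
  obtain ⟨D, hDc, hDd⟩ := TopologicalSpace.exists_countable_dense T
  have hD : ∀ a b, a < b → ∃ d : ↥(D ∩ Ioo x y), (d : T) ∈ Ioo a b := fun a b hab => by
    have hopen : IsOpen (Ioo a b) := by
      rw [← Ioi_inter_Iio, ← compl_Iic, ← compl_Ici]
      exact (hIic a).isOpen_compl.inter (hIci b).isOpen_compl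
    obtain ⟨d, ⟨had, hdb⟩, hdD⟩ := hDd.inter_open_nonempty _ hopen (nonempty_Ioo.2 hab)
    exact ⟨⟨d, hdD, (hx a).trans_lt had, hdb.trans_le (hy b)⟩, had, hdb⟩
  have : Countable ↥(D ∩ Ioo x y) := (hDc.mono inter_subset_left).to_subtype
  have : Nonempty ↥(D ∩ Ioo x y) := (hD x y hxy).nonempty
  have : DenselyOrdered ↥(D ∩ Ioo x y) := ⟨fun a b hab => hD a b hab⟩
  have : NoMinOrder ↥(D ∩ Ioo x y) := ⟨fun a => (hD x a a.2.2.1).imp fun _ hd => hd.2⟩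
  have : NoMaxOrder ↥(D ∩ Ioo x y) := ⟨fun a => (hD a y a.2.2.2).imp fun _ hd => hd.1⟩
  exact ⟨D ∩ Ioo x y, inter_subset_right, hD, exists_strictMono_forall_exists_mem_Ioo⟩

theorem continuous_extendBySup {D : Set T} {g : D → ℝ} (hIic : ∀ b : T, IsClosed (Iic b))
    (hIci : ∀ b : T, IsClosed (Ici b)) (hg : StrictMono g) (hg01 : ∀ d, g d ∈ Ioo 0 1)
    (hgdense : ∀ ⦃s t : ℝ⦄, 0 ≤ s → s < t → t ≤ 1 → ∃ d, g d ∈ Ioo s t) :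
    Continuous (extendBySup g) := by
  have hf01 := extendBySup_mem_Icc hg01
  refine OrderTopology.continuous_iff.2 fun t => ⟨?_, ?_⟩
  · refine isOpen_iff_forall_mem_open.2 fun p (hp : t < extendBySup g p) => ?_
    rcases lt_or_ge t 0 with ht | ht
    · exact ⟨univ, fun z _ => ht.trans_le (hf01 z).1, isOpen_univ, mem_univ p⟩
    obtain ⟨d, htd, hdp⟩ := hgdense ht hp (hf01 p).2
    refine ⟨Ioi (d : T), fun z hz => htd.trans_le (le_extendBySup hg01 hz.le), ?_,
      lt_of_not_ge fun h => (extendBySup_le hg hg01 h).not_gt hdp⟩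
    simpa only [compl_Iic] using (hIic d).isOpen_compl
  · refine isOpen_iff_forall_mem_open.2 fun p (hp : extendBySup g p < t) => ?_
    rcases lt_or_ge 1 t with ht | ht
    · exact ⟨univ, fun z _ => (hf01 z).2.trans_lt ht, isOpen_univ, mem_univ p⟩
    obtain ⟨d, hpd, hdt⟩ := hgdense (hf01 p).1 hp ht
    refine ⟨Iio (d : T), fun z hz => (extendBySup_le hg hg01 hz.le).trans_lt hdt, ?_,
      lt_of_not_ge fun h => (le_extendBySup hg01 h).not_gt hpd⟩
    simpa only [compl_Ici] using (hIci d).isOpen_compl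

theorem exists_homeomorph_unitInterval_of_isClosed_Iic_Ici [CompactSpace T] [ConnectedSpace T]
    [TopologicalSpace.SeparableSpace T]
    (hIic : ∀ b : T, IsClosed (Iic b)) (hIci : ∀ b : T, IsClosed (Ici b)) {x y : T}
    (hx : ∀ z, x ≤ z) (hy : ∀ z, z ≤ y) (hxy : x < y) :
    ∃ e : T ≃ₜ unitInterval, e x = 0 ∧ e y = 1 := by
  have := denselyOrdered_of_isClosed_Iic_Ici hIic hIci
  obtain ⟨D, hDxy, hD, g, hg, hg01, hgdense⟩ := exists_orderDense_strictMono hIic hIci hx hy hxy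
  set f := extendBySup g
  have hf : ∀ p, f p ∈ unitInterval := extendBySup_mem_Icc hg01
  have hfc : Continuous f := continuous_extendBySup hIic hIci hg hg01 hgdense
  have hfm : StrictMono f := strictMono_extendBySup hD hg hg01
  have hfx : f x = 0 := le_antisymm (Real.sSup_le (by
    rintro _ ⟨d, hd, rfl⟩
    exact absurd hd (hDxy d.2).1.not_ge) le_rfl) (hf x).1
  have hfy : f y = 1 := le_antisymm (hf y).2 (not_lt.1 fun h => by
    obtain ⟨d, hd, -⟩ := hgdense (hf y).1 h le_rfl
    exact (le_extendBySup hg01 (hy d)).not_gt hd)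
  have hsurj : Function.Surjective fun p => (⟨f p, hf p⟩ : unitInterval) := by
    rintro ⟨t, ht⟩
    obtain ⟨p, hp⟩ := (isPreconnected_range hfc).Icc_subset ⟨x, hfx⟩ ⟨y, hfy⟩ ht
    exact ⟨p, Subtype.ext hp⟩
  let E : T ≃ unitInterval := Equiv.ofBijective _
    ⟨fun a b h => hfm.injective (congrArg Subtype.val h), hsurj⟩
  have hE : Continuous E := hfc.subtype_mk hf
  exact ⟨hE.homeoOfEquivCompactToT2, Subtype.ext hfx, Subtype.ext hfy⟩

end OrderArc

section Continua

variable {X : Type*} [TopologicalSpace X]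

theorem exists_isClopen_subset_of_connectedComponent_subset [T2Space X] [CompactSpace X]
    {u : X} {U : Set X} (hU : IsOpen U) (h : connectedComponent u ⊆ U) :
    ∃ Z, IsClopen Z ∧ u ∈ Z ∧ Z ⊆ U := by
  let N := {Z : Set X // IsClopen Z ∧ u ∈ Z}
  have : Nonempty N := ⟨⟨univ, isClopen_univ, mem_univ u⟩⟩
  have hdir : Directed (· ⊇ ·) fun Z : N => Z.1 := fun Z₁ Z₂ =>
    ⟨⟨Z₁.1 ∩ Z₂.1, Z₁.2.1.inter Z₂.2.1, Z₁.2.2, Z₂.2.2⟩, inter_subset_left, inter_subset_right⟩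
  obtain ⟨Z, hZU⟩ := exists_subset_nhds_of_compactSpace hdir (fun Z => Z.2.1.isClosed)
    fun z hz => hU.mem_nhds (h (connectedComponent_eq_iInter_isClopen u ▸ hz))
  exact ⟨Z.1, Z.2.1, Z.2.2, hZU⟩

theorem IsChain.isConnected_sInter [T2Space X] {c : Set (Set X)} (hc : IsChain (· ⊆ ·) c)
    (hne : c.Nonempty) (hcomp : ∀ s ∈ c, IsCompact s) (hconn : ∀ s ∈ c, IsConnected s) :
    IsConnected (⋂₀ c) := by
  have : Nonempty c := hne.to_subtype
  have hdir : Directed (· ⊇ ·) fun s : c => s.1 := fun s t =>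
    (hc.total s.2 t.2).elim (fun h => ⟨s, subset_rfl, h⟩) fun h => ⟨t, h, subset_rfl⟩
  have hK : IsClosed (⋂₀ c) := isClosed_sInter fun s hs => (hcomp s hs).isClosed
  obtain ⟨s₀, hs₀⟩ := hne
  have hKc : IsCompact (⋂₀ c) := (hcomp s₀ hs₀).of_isClosed_subset hK (sInter_subset_of_mem hs₀)
  rw [sInter_eq_iInter] at hK hKc ⊢
  refine ⟨IsCompact.nonempty_iInter_of_directed_nonempty_isCompact_isClosed _ hdir
    (fun s => (hconn s s.2).nonempty) (fun s => hcomp s s.2) fun s => (hcomp s s.2).isClosed, ?_⟩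
  rw [isPreconnected_iff_subset_of_fully_disjoint_closed hK]
  intro a b ha hb hab hdisj
  obtain ⟨U, V, hU, hV, haU, hbV, hUV⟩ := SeparatedNhds.of_isCompact_isCompact
    (hKc.inter_left ha) (hKc.inter_left hb) (hdisj.mono inter_subset_left inter_subset_left)
  -- Some member of the chain already lies in `U ∪ V`, and it is connected.
  obtain ⟨s, hsUV⟩ := exists_subset_nhds_of_isCompact hdir (fun s => hcomp s s.2)
    fun z hz => (hU.union hV).mem_nhds ((hab hz).imp (fun h => haU ⟨h, hz⟩) fun h => hbV ⟨h, hz⟩)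
  have hKs : (⋂ s : c, s.1) ⊆ s.1 := iInter_subset _ s
  rcases (hconn s s.2).isPreconnected.subset_or_subset hU hV hUV hsUV with hsU | hsV
  · exact .inl fun z hz => (hab hz).resolve_right fun hzb =>
      hUV.le_bot ⟨hsU (hKs hz), hbV ⟨hzb, hz⟩⟩
  · exact .inr fun z hz => (hab hz).resolve_left fun hza =>
      hUV.le_bot ⟨haU ⟨hza, hz⟩, hsV (hKs hz)⟩

structure IsIrreducibleBetween (W : Set X) (u v : X) : Prop where
  isCompact : IsCompact W
  isConnected : IsConnected W
  left_mem : u ∈ W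
  right_mem : v ∈ W
  eq_of_subset : ∀ C ⊆ W, IsCompact C → IsConnected C → u ∈ C → v ∈ C → C = W

theorem IsIrreducibleBetween.symm {W : Set X} {u v : X} (h : IsIrreducibleBetween W u v) :
    IsIrreducibleBetween W v u :=
  ⟨h.isCompact, h.isConnected, h.right_mem, h.left_mem,
    fun C hCW hCc hC hvC huC => h.eq_of_subset C hCW hCc hC huC hvC⟩

theorem IsIrreducibleBetween.eq_singleton {W : Set X} {u : X} (h : IsIrreducibleBetween W u u) :
    W = {u} :=
  (h.eq_of_subset {u} (singleton_subset_iff.2 h.left_mem) isCompact_singleton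
    isConnected_singleton rfl rfl).symm

theorem exists_isIrreducibleBetween [T2Space X] {T : Set X} (hTc : IsCompact T)
    (hT : IsConnected T) {u v : X} (hu : u ∈ T) (hv : v ∈ T) :
    ∃ W ⊆ T, IsIrreducibleBetween W u v := by
  let S : Set (Set X) := {C | IsCompact C ∧ IsConnected C ∧ u ∈ C ∧ v ∈ C}
  have hchain : ∀ c ⊆ S, IsChain (· ⊆ ·) c → c.Nonempty → ∃ lb ∈ S, ∀ s ∈ c, lb ⊆ s :=
    fun c hcS hc hne => by
      obtain ⟨s₀, hs₀⟩ := hne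
      have hK : IsClosed (⋂₀ c) := isClosed_sInter fun s hs => (hcS hs).1.isClosed
      exact ⟨⋂₀ c, ⟨(hcS hs₀).1.of_isClosed_subset hK (sInter_subset_of_mem hs₀),
        hc.isConnected_sInter ⟨s₀, hs₀⟩ (fun s hs => (hcS hs).1) fun s hs => (hcS hs).2.1,
        fun s hs => (hcS hs).2.2.1, fun s hs => (hcS hs).2.2.2⟩, fun s => sInter_subset_of_mem⟩
  obtain ⟨W, hWT, hW⟩ := zorn_superset_nonempty S hchain T ⟨hTc, hT, hu, hv⟩
  exact ⟨W, hWT, hW.prop.1, hW.prop.2.1, hW.prop.2.2.1, hW.prop.2.2.2,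
    fun C hCW hCc hC huC hvC => hW.eq_of_subset ⟨hCc, hC, huC, hvC⟩ hCW⟩

end Continua

section Precedes

variable {X : Type*} [TopologicalSpace X] {M : Set X} {x y a b : X}

-- When `M` is an arc from `x`, `Precedes M x a b` says that `a` lies on the subarc from `x` to `b`.
def Precedes (M : Set X) (x a b : X) : Prop :=
  ∀ C ⊆ M, IsCompact C → IsConnected C → x ∈ C → b ∈ C → a ∈ C

theorem precedes_refl : Precedes M x a a := fun _ _ _ _ _ h => h

theorem Precedes.trans {c : X} (hab : Precedes M x a b) (hbc : Precedes M x b c) :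
    Precedes M x a c := fun C hCM hCc hC hxC hcC => hab C hCM hCc hC hxC (hbc C hCM hCc hC hxC hcC)

theorem isClosed_setOf_precedes [T2Space X] : IsClosed {a | Precedes M x a b} := by
  simp only [Precedes, ofPred_forall]
  exact isClosed_iInter fun C => isClosed_iInter fun _ => isClosed_iInter fun hC =>
    isClosed_iInter fun _ => isClosed_iInter fun _ => isClosed_iInter fun _ => hC.isClosed

theorem IsIrreducibleBetween.precedes_of_not_precedes (hM : IsIrreducibleBetween M x y)
    (ha : a ∈ M) (h : ¬Precedes M x a b) : Precedes M y a b := by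
  simp only [Precedes, not_forall] at h
  obtain ⟨C, hCM, hCc, hC, hxC, hbC, haC⟩ := h
  intro K hKM hKc hK hyK hbK
  have hCK : C ∪ K = M := hM.eq_of_subset _ (union_subset hCM hKM) (hCc.union hKc)
    (IsConnected.union ⟨b, hbC, hbK⟩ hC hK) (.inl hxC) (.inr hyK)
  exact (hCK ▸ ha : a ∈ C ∪ K).resolve_left haC

end Precedes

theorem exists_nontrivial_continuum_subset_closedBall {Y : Type*} [MetricSpace Y] [CompactSpace Y]
    [ConnectedSpace Y] [Nontrivial Y] (u : Y) {ε : ℝ} (hε : 0 < ε) :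
    ∃ A : Set Y, IsCompact A ∧ IsConnected A ∧ A.Nontrivial ∧ u ∈ A ∧ A ⊆ closedBall u ε := by
  let K := closedBall u ε
  have : CompactSpace K := isCompact_iff_compactSpace.1 (isCompact_closedBall u ε)
  let u' : K := ⟨u, mem_closedBall_self hε.le⟩
  refine ⟨Subtype.val '' connectedComponent u',
    isClosed_connectedComponent.isCompact.image continuous_subtype_val,
    isConnected_connectedComponent.image _ continuous_subtype_val.continuousOn, ?_,
    mem_image_of_mem _ mem_connectedComponent, image_subset_iff.2 fun z _ => z.2⟩
  by_contra hA
  have hcomp : connectedComponent u' ⊆ Subtype.val ⁻¹' ball u ε := fun z hz => by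
    rw [mem_preimage, not_nontrivial_iff.1 hA (mem_image_of_mem _ hz)
      (mem_image_of_mem _ mem_connectedComponent)]
    exact mem_ball_self hε
  obtain ⟨Z, hZ, huZ, hZball⟩ := exists_isClopen_subset_of_connectedComponent_subset
    (isOpen_ball.preimage continuous_subtype_val) hcomp
  obtain ⟨V, hV, hVZ⟩ := isOpen_induced_iff.1 hZ.isOpen
  have hZopen : Subtype.val '' Z = V ∩ ball u ε := by
    ext z
    constructor
    · rintro ⟨z, hz, rfl⟩
      exact ⟨(hVZ.symm ▸ hz : z ∈ Subtype.val ⁻¹' V), hZball hz⟩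
    · rintro ⟨hzV, hzb⟩
      exact ⟨⟨z, ball_subset_closedBall hzb⟩, hVZ ▸ (hzV : _ ∈ Subtype.val ⁻¹' V), rfl⟩
  -- A clopen subset of `K` inside the open ball is clopen in `Y`, so `Y` is the ball.
  have hZuniv : Subtype.val '' Z = univ :=
    IsClopen.eq_univ ⟨(hZ.isClosed.isCompact.image continuous_subtype_val).isClosed,
      hZopen ▸ hV.inter isOpen_ball⟩ ⟨u, u', huZ, rfl⟩
  have hK : K = univ := eq_univ_of_forall fun z =>
    ball_subset_closedBall (image_subset_iff.2 hZball (hZuniv ▸ mem_univ z))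
  have : PreconnectedSpace K := Subtype.preconnectedSpace (hK ▸ isPreconnected_univ)
  apply hA
  rw [PreconnectedSpace.connectedComponent_eq_univ, image_univ, Subtype.range_coe, hK]
  exact nontrivial_univ

theorem Set.Nontrivial.preimage_val {X : Type*} {W A : Set X} (hA : A.Nontrivial) (hAW : A ⊆ W) :
    (Subtype.val ⁻¹' A : Set W).Nontrivial := by
  obtain ⟨a, ha, b, hb, hab⟩ := hA
  exact ⟨⟨a, hAW ha⟩, ha, ⟨b, hAW hb⟩, hb, fun h => hab (congrArg Subtype.val h)⟩

section Subspace

variable {X : Type*} [TopologicalSpace X] {W A : Set X}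

theorem IsCompact.preimage_val (hA : IsCompact A) (hAW : A ⊆ W) :
    IsCompact (Subtype.val ⁻¹' A : Set W) := by
  rwa [IsEmbedding.subtypeVal.isCompact_iff, Subtype.image_preimage_coe, inter_eq_right.2 hAW]

theorem IsConnected.preimage_val (hA : IsConnected A) (hAW : A ⊆ W) :
    IsConnected (Subtype.val ⁻¹' A : Set W) := by
  obtain ⟨a, ha⟩ := hA.nonempty
  refine ⟨⟨⟨a, hAW ha⟩, ha⟩, ?_⟩
  rw [← IsInducing.subtypeVal.isPreconnected_image, Subtype.image_preimage_coe,
    inter_eq_right.2 hAW]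
  exact hA.isPreconnected

end Subspace

theorem IsCompact.exists_nontrivial_subcontinuum_subset_closedBall {X : Type*} [MetricSpace X]
    {W : Set X} (hWc : IsCompact W) (hW : IsConnected W) (hWnt : W.Nontrivial) {u : X}
    (hu : u ∈ W) {ε : ℝ} (hε : 0 < ε) :
    ∃ A ⊆ W, IsCompact A ∧ IsConnected A ∧ A.Nontrivial ∧ u ∈ A ∧ A ⊆ closedBall u ε := by
  have : CompactSpace W := isCompact_iff_compactSpace.1 hWc
  have : ConnectedSpace W := Subtype.connectedSpace hW
  have : Nontrivial W := hWnt.coe_sort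
  obtain ⟨A, hAc, hA, hAnt, huA, hAball⟩ :=
    exists_nontrivial_continuum_subset_closedBall (⟨u, hu⟩ : W) hε
  refine ⟨Subtype.val '' A, image_subset_iff.2 fun z _ => z.2,
    hAc.image continuous_subtype_val, hA.image _ continuous_subtype_val.continuousOn,
    hAnt.image Subtype.val_injective, mem_image_of_mem _ huA, ?_⟩
  rintro _ ⟨z, hz, rfl⟩
  exact hAball hz

def HereditarilyDStarStar (X : Type*) [TopologicalSpace X] : Prop :=
  ∀ S : Set X, IsCompact S → IsConnected S → S.Nontrivial → DStarStarSpace S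

namespace HereditarilyDStarStar

variable {X : Type*}

theorem exists_subcontinuum [TopologicalSpace X] (hD : HereditarilyDStarStar X)
    {W A B : Set X} (hWc : IsCompact W) (hW : IsConnected W) (hAW : A ⊆ W) (hBW : B ⊆ W)
    (hAc : IsCompact A) (hA : IsConnected A) (hAnt : A.Nontrivial)
    (hBc : IsCompact B) (hB : IsConnected B) (hBnt : B.Nontrivial) (hAB : Disjoint A B) :
    ∃ C ⊆ W, IsCompact C ∧ IsConnected C ∧
      (A ∩ C).Nonempty ∧ (B ∩ C).Nonempty ∧ (B \ C).Nonempty := by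
  obtain ⟨C, hCc, hC, ⟨a, haA, haC⟩, ⟨b, hbB, hbC⟩, ⟨b', hb'B, hb'C⟩⟩ :=
    hD W hWc hW (hAnt.mono hAW) _ _ (hAc.preimage_val hAW) (hA.preimage_val hAW)
      (hAnt.preimage_val hAW) (hBc.preimage_val hBW) (hB.preimage_val hBW)
      (hBnt.preimage_val hBW) (hAB.preimage _)
  exact ⟨Subtype.val '' C, image_subset_iff.2 fun z _ => z.2, hCc.image continuous_subtype_val,
    hC.image _ continuous_subtype_val.continuousOn, ⟨a, haA, mem_image_of_mem _ haC⟩,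
    ⟨b, hbB, mem_image_of_mem _ hbC⟩, ⟨b', hb'B, Subtype.val_injective.mem_set_image.not.2 hb'C⟩⟩

variable [MetricSpace X] {W M : Set X} {u q x y a b : X}

theorem exists_proper_subcontinuum (hD : HereditarilyDStarStar X) {B : Set X}
    (hWc : IsCompact W) (hW : IsConnected W) (hu : u ∈ W) (hBW : B ⊆ W) (hBc : IsCompact B)
    (hB : IsConnected B) (hBnt : B.Nontrivial) :
    ∃ b ∈ B, ∃ C ⊆ W, IsCompact C ∧ IsConnected C ∧ u ∈ C ∧ b ∈ C ∧ C ≠ W := by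
  by_cases huB : u ∈ B
  · refine ⟨u, huB, {u}, singleton_subset_iff.2 hu, isCompact_singleton, isConnected_singleton,
      rfl, rfl, fun h => ?_⟩
    exact not_nontrivial_singleton (h ▸ hBnt.mono hBW)
  obtain ⟨δ, hδ, hδB⟩ := Metric.nhds_basis_closedBall.mem_iff.1
    (hBc.isClosed.isOpen_compl.mem_nhds huB)
  obtain ⟨A, hAW, hAc, hA, hAnt, huA, hAball⟩ :=
    hWc.exists_nontrivial_subcontinuum_subset_closedBall hW (hBnt.mono hBW) hu hδ
  have hAB : Disjoint A B := disjoint_left.2 fun z hz => hδB (hAball hz)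
  obtain ⟨C, hCW, hCc, hC, ⟨a, haA, haC⟩, ⟨b, hbB, hbC⟩, ⟨b', hb'B, hb'C⟩⟩ :=
    hD.exists_subcontinuum hWc hW hAW hBW hAc hA hAnt hBc hB hBnt hAB
  refine ⟨b, hbB, C ∪ A, union_subset hCW hAW, hCc.union hAc,
    IsConnected.union ⟨a, haC, haA⟩ hC hA, .inr huA, .inl hbC, fun h => ?_⟩
  rcases (h ▸ hBW hb'B : b' ∈ C ∪ A) with hb' | hb'
  exacts [hb'C hb', disjoint_left.1 hAB hb' hb'B]

theorem exists_subcontinuum_diff_closedBall_subset (hD : HereditarilyDStarStar X)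
    (hW : IsIrreducibleBetween W u q) (huq : u ≠ q) {ε : ℝ} (hε : 0 < ε) :
    ∃ C ⊆ W, IsCompact C ∧ IsConnected C ∧ u ∈ C ∧ q ∉ C ∧ W \ closedBall q ε ⊆ C := by
  obtain ⟨B, hBW, hBc, hB, hBnt, hqB, hBball⟩ :=
    hW.isCompact.exists_nontrivial_subcontinuum_subset_closedBall hW.isConnected
      ⟨u, hW.left_mem, q, hW.right_mem, huq⟩ hW.right_mem hε
  obtain ⟨b, hbB, C, hCW, hCc, hC, huC, hbC, hCW'⟩ :=
    hD.exists_proper_subcontinuum hW.isCompact hW.isConnected hW.left_mem hBW hBc hB hBnt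
  have hCB : C ∪ B = W := hW.eq_of_subset _ (union_subset hCW hBW) (hCc.union hBc)
    (IsConnected.union ⟨b, hbC, hbB⟩ hC hB) (.inl huC) (.inr hqB)
  refine ⟨C, hCW, hCc, hC, huC, fun hqC => hCW' (hW.eq_of_subset C hCW hCc hC huC hqC),
    fun z hz => ?_⟩
  exact (hCB ▸ hz.1 : z ∈ C ∪ B).resolve_right fun hzB => hz.2 (hBball hzB)

theorem eq_of_isIrreducibleBetween (hD : HereditarilyDStarStar X) {q' : X}
    (h : IsIrreducibleBetween W u q) (h' : IsIrreducibleBetween W u q') : q = q' := by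
  by_contra hne
  rcases eq_or_ne u q with rfl | huq
  · exact hne (h.eq_singleton ▸ h'.right_mem : q' ∈ ({u} : Set X)).symm
  have hdist : 0 < dist q' q := dist_pos.2 (Ne.symm hne)
  obtain ⟨C, hCW, hCc, hC, huC, hqC, hfar⟩ :=
    hD.exists_subcontinuum_diff_closedBall_subset h huq (half_pos hdist)
  have hq'C : q' ∈ C := hfar ⟨h'.right_mem, (half_lt_self hdist).not_ge⟩
  exact hqC (h'.eq_of_subset C hCW hCc hC huC hq'C ▸ h.right_mem)

theorem precedes_antisymm (hD : HereditarilyDStarStar X) (hMc : IsCompact M)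
    (hM : IsConnected M) (hx : x ∈ M) (hb : b ∈ M) (hab : Precedes M x a b)
    (hba : Precedes M x b a) : a = b := by
  obtain ⟨W, hWM, hW⟩ := exists_isIrreducibleBetween hMc hM hx hb
  have haW := hab W hWM hW.isCompact hW.isConnected hW.left_mem hW.right_mem
  obtain ⟨W', hW'W, hW'⟩ :=
    exists_isIrreducibleBetween hW.isCompact hW.isConnected hW.left_mem haW
  have hbW' := hba W' (hW'W.trans hWM) hW'.isCompact hW'.isConnected hW'.left_mem hW'.right_mem
  -- `W` is irreducible both from `x` to `b` and from `x` to `a`.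
  have hW'eq : W' = W := hW.eq_of_subset W' hW'W hW'.isCompact hW'.isConnected hW'.left_mem hbW'
  exact hD.eq_of_isIrreducibleBetween (hW'eq ▸ hW') hW

theorem precedes_swap (hD : HereditarilyDStarStar X) (hM : IsIrreducibleBetween M x y)
    (hb : b ∈ M) (h : Precedes M x a b) : Precedes M y b a := by
  by_contra h'
  obtain rfl := hD.precedes_antisymm hM.isCompact hM.isConnected hM.left_mem hb h
    (hM.symm.precedes_of_not_precedes hb h')
  exact h' precedes_refl

theorem precedes_total (hD : HereditarilyDStarStar X) (hM : IsIrreducibleBetween M x y)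
    (ha : a ∈ M) (hb : b ∈ M) : Precedes M x a b ∨ Precedes M x b a :=
  or_iff_not_imp_left.2 fun h => hD.precedes_swap hM.symm hb (hM.precedes_of_not_precedes ha h)

noncomputable abbrev precedesLinearOrder (hD : HereditarilyDStarStar X)
    (hM : IsIrreducibleBetween M x y) : LinearOrder M where
  le a b := Precedes M x a b
  le_refl _ := precedes_refl
  le_trans _ _ _ := Precedes.trans
  le_antisymm a b hab hba :=
    Subtype.ext (hD.precedes_antisymm hM.isCompact hM.isConnected hM.left_mem b.2 hab hba)
  le_total a b := hD.precedes_total hM a.2 b.2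
  toDecidableLE := Classical.decRel _

theorem arcConnectedSpace (hD : HereditarilyDStarStar X) {S : Set X} (hSc : IsCompact S)
    (hS : IsConnected S) : ArcConnectedSpace S := by
  intro p q hpq
  obtain ⟨M, hMS, hM⟩ := exists_isIrreducibleBetween hSc hS p.2 q.2
  let := hD.precedesLinearOrder hM
  have : CompactSpace M := isCompact_iff_compactSpace.1 hM.isCompact
  have : ConnectedSpace M := Subtype.connectedSpace hM.isConnected
  let x : M := ⟨p, hM.left_mem⟩
  let y : M := ⟨q, hM.right_mem⟩
  have hx : ∀ z, x ≤ z := fun z C _ _ _ hxC _ => hxC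
  have hy : ∀ z, z ≤ y := fun z C hCM hCc hC hxC hyC =>
    hM.eq_of_subset C hCM hCc hC hxC hyC ▸ z.2
  have hIic : ∀ b : M, IsClosed (Iic b) := fun b =>
    (isClosed_setOf_precedes (M := M) (x := p) (b := b)).preimage continuous_subtype_val
  have hIci : ∀ b : M, IsClosed (Ici b) := fun b => by
    have : Ici b = Subtype.val ⁻¹' {a | Precedes M q a b} :=
      ext fun z => ⟨hD.precedes_swap hM z.2, hD.precedes_swap hM.symm b.2⟩
    exact this ▸ isClosed_setOf_precedes.preimage continuous_subtype_val
  obtain ⟨e, he0, he1⟩ := exists_homeomorph_unitInterval_of_isClosed_Iic_Ici hIic hIci hx hy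
    ((hx y).lt_of_ne fun h => hpq (Subtype.ext (congrArg (Subtype.val : M → X) h)))
  refine ⟨inclusion hMS ∘ e.symm, (continuous_inclusion hMS).comp e.symm.continuous,
    (inclusion_injective hMS).comp e.symm.injective, ?_, ?_⟩
  · exact congrArg (inclusion hMS) (e.symm_apply_eq.2 he0.symm)
  · exact congrArg (inclusion hMS) (e.symm_apply_eq.2 he1.symm)

end HereditarilyDStarStar

section ArcsAndWilder

variable {Y : Type*} [TopologicalSpace Y]

theorem WilderSpace.dStarStarSpace (h : WilderSpace Y) : DStarStarSpace Y := by
  intro A B _ hA _ _ _ hBnt hAB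
  obtain ⟨a, ha⟩ := hA.nonempty
  obtain ⟨b₁, hb₁, b₂, hb₂, hb⟩ := hBnt
  obtain ⟨C, hCc, hC, haC, h₁ | h₂⟩ :=
    h a b₁ b₂ (hAB.ne_of_mem ha hb₁) hb (hAB.ne_of_mem ha hb₂)
  · exact ⟨C, hCc, hC, ⟨a, ha, haC⟩, ⟨b₁, hb₁, h₁.1⟩, ⟨b₂, hb₂, h₁.2⟩⟩
  · exact ⟨C, hCc, hC, ⟨a, ha, haC⟩, ⟨b₂, hb₂, h₂.1⟩, ⟨b₁, hb₁, h₂.2⟩⟩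

theorem DStarSpace.dStarStarSpace (h : DStarSpace Y) : DStarStarSpace Y := by
  intro A B hAc hA hAnt hBc hB hBnt hAB
  obtain ⟨C, hCc, hC, hAC, hBC, -, hBC'⟩ := h A B hAc hA hAnt hBc hB hBnt hAB
  exact ⟨C, hCc, hC, hAC, hBC, hBC'⟩

theorem ArcConnectedSpace.wilderSpace (h : ArcConnectedSpace Y) : WilderSpace Y := by
  intro x y z hxy hyz hxz
  obtain ⟨f, hfc, hfi, hf0, hf1⟩ := h x y hxy
  by_cases hz : z ∈ range f
  · obtain ⟨t, rfl⟩ := hz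
    have ht : 0 ≤ t := unitInterval.nonneg'
    refine ⟨f '' Icc 0 t, isCompact_Icc.image hfc, (isConnected_Icc ht).image _ hfc.continuousOn,
      ⟨0, left_mem_Icc.2 ht, hf0⟩, .inr ⟨mem_image_of_mem _ (right_mem_Icc.2 ht), ?_⟩⟩
    rintro ⟨s, hs, hsy⟩
    obtain rfl : s = 1 := hfi (hsy.trans hf1.symm)
    obtain rfl : t = 1 := le_antisymm (unitInterval.le_one t) hs.2
    exact hyz hf1.symm
  · exact ⟨range f, isCompact_range hfc, isConnected_range hfc, ⟨0, hf0⟩, .inl ⟨⟨1, hf1⟩, hz⟩⟩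

theorem ArcConnectedSpace.dStarSpace [T2Space Y] (h : ArcConnectedSpace Y) : DStarSpace Y := by
  intro A B hAc hA hAnt hBc hB hBnt hAB
  obtain ⟨a, ha⟩ := hA.nonempty
  obtain ⟨b, hb⟩ := hB.nonempty
  obtain ⟨f, hfc, -, hf0, hf1⟩ := h a b (hAB.ne_of_mem ha hb)
  -- The subarc from the last exit of `f` from `A` to its next entry into `B`.
  obtain ⟨s, hsA, hs⟩ :=
    (hAc.isClosed.preimage hfc).isCompact.exists_isGreatest ⟨0, (hf0 ▸ ha : f 0 ∈ A)⟩
  obtain ⟨t, ⟨htB, hst⟩, ht⟩ :=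
    ((hBc.isClosed.preimage hfc).inter isClosed_Ici).isCompact.exists_isLeast
      ⟨1, (hf1 ▸ hb : f 1 ∈ B), unitInterval.le_one s⟩
  have hAC : ∀ a ∈ A ∩ f '' Icc s t, a = f s := by
    rintro _ ⟨haA, r, hr, rfl⟩
    rw [le_antisymm (hs haA) hr.1]
  have hBC : ∀ b ∈ B ∩ f '' Icc s t, b = f t := by
    rintro _ ⟨hbB, r, hr, rfl⟩
    rw [le_antisymm hr.2 (ht ⟨hbB, hr.1⟩)]
  obtain ⟨a', ha'A, ha'⟩ := hAnt.exists_ne (f s)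
  obtain ⟨b', hb'B, hb'⟩ := hBnt.exists_ne (f t)
  exact ⟨f '' Icc s t, isCompact_Icc.image hfc, (isConnected_Icc hst).image _ hfc.continuousOn,
    ⟨f s, hsA, mem_image_of_mem _ ⟨le_rfl, hst⟩⟩, ⟨f t, htB, mem_image_of_mem _ ⟨hst, le_rfl⟩⟩,
    ⟨a', ha'A, fun h => ha' (hAC a' ⟨ha'A, h⟩)⟩, ⟨b', hb'B, fun h => hb' (hBC b' ⟨hb'B, h⟩)⟩⟩

end ArcsAndWilder

theorem hereditarily_wilder_tfae_general (X : Type*) [MetricSpace X] :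
    List.TFAE
      [∀ S : Set X, IsCompact S → IsConnected S → S.Nontrivial → WilderSpace ↥S,
       ∀ S : Set X, IsCompact S → IsConnected S → S.Nontrivial → DStarSpace ↥S,
       ∀ S : Set X, IsCompact S → IsConnected S → S.Nontrivial → DStarStarSpace ↥S,
       ∀ S : Set X, IsCompact S → IsConnected S → ArcConnectedSpace ↥S] := by
  tfae_have 1 → 3 := fun h S hSc hS hSnt => (h S hSc hS hSnt).dStarStarSpace
  tfae_have 2 → 3 := fun h S hSc hS hSnt => (h S hSc hS hSnt).dStarStarSpace
  tfae_have 3 → 4 := fun h S hSc hS => HereditarilyDStarStar.arcConnectedSpace h hSc hS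
  tfae_have 4 → 1 := fun h S hSc hS _ => (h S hSc hS).wilderSpace
  tfae_have 4 → 2 := fun h S hSc hS _ => (h S hSc hS).dStarSpace
  tfae_finish

/-- For a nondegenerate continuum `X` the following are equivalent:
(1) every nondegenerate subcontinuum of `X` is Wilder;
(2) every nondegenerate subcontinuum of `X` is D*;
(3) every nondegenerate subcontinuum of `X` is D**;
(4) every subcontinuum of `X` is arcwise connected. -/
theorem hereditarily_wilder_tfae (X : Type*) [MetricSpace X] [CompactSpace X]
    [ConnectedSpace X] [Nontrivial X] :
    List.TFAE
      [∀ S : Set X, IsCompact S → IsConnected S → S.Nontrivial → WilderSpace ↥S,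
       ∀ S : Set X, IsCompact S → IsConnected S → S.Nontrivial → DStarSpace ↥S,
       ∀ S : Set X, IsCompact S → IsConnected S → S.Nontrivial → DStarStarSpace ↥S,
       ∀ S : Set X, IsCompact S → IsConnected S → ArcConnectedSpace ↥S] :=
  hereditarily_wilder_tfae_general X
end

section
/- Let X be a continuum, μ : C(X) → [0, μ(X)] a Whitney map, and t ∈ (0, μ(X)). For any two distinct elements A, B ∈ μ⁻¹(t) with A ∩ B ≠ ∅, there exists an arc 𝓘 ⊆ μ⁻¹(t) from A to B such that L ⊆ A ∪ B for every L ∈ 𝓘; moreover, for any given connected component K of A ∩ B, the arc 𝓘 may be chosen so that in addition K ⊆ L for every L ∈ 𝓘. -/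
open TopologicalSpace

/-- The hyperspace `C(X)` of all subcontinua of `X`, i.e. nonempty compact connected
subsets, with the Hausdorff metric. -/
abbrev Hyperspace (X : Type*) [MetricSpace X] : Type _ :=
  {K : NonemptyCompacts X // IsConnected (K : Set X)}

/-!
Take order arcs `σ` from `K` to `A` and `τ` from `K` to `B`: maximal chains of subcontinua,
parametrized by `μ`. They have no gaps because between two nested distinct continua there is
always a third one (boundary bumping). The map `(p, q) ↦ μ (σ p ∪ τ q)` is continuous and
monotone, so the first point where the line `v ↦ (v, v - c)` reaches the level `t` moves
continuously and monotonically with `c`. This gives a path `c ↦ σ (h c) ∪ τ (h c - c)` in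
`μ⁻¹(t)` from `B` to `A` whose fibres are intervals, since no element of a Whitney level
properly contains another. Collapsing these intervals turns the path into an arc.
-/

open Set Metric Topology Function

section Topology
variable {α : Type*} [TopologicalSpace α]

theorem IsClosed.connectedComponentIn {F : Set α} (hF : IsClosed F) (x : α) :
    IsClosed (connectedComponentIn F x) := by
  by_cases hx : x ∈ F
  · exact isClosed_of_closure_subset <| isPreconnected_connectedComponentIn.closure
      |>.subset_connectedComponentIn (subset_closure (mem_connectedComponentIn hx))
        (closure_minimal (connectedComponentIn_subset _ _) hF)
  · rw [connectedComponentIn_eq_empty hx]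
    exact isClosed_empty

theorem exists_isClopen_of_connectedComponent_subset [T2Space α] [CompactSpace α] {x : α}
    {U : Set α} (hU : IsOpen U) (h : connectedComponent x ⊆ U) :
    ∃ Z, IsClopen Z ∧ x ∈ Z ∧ Z ⊆ U := by
  rw [connectedComponent_eq_iInter_isClopen, ← sdiff_eq_empty, sdiff_eq, inter_comm] at h
  obtain ⟨t, ht⟩ := hU.isClosed_compl.isCompact.elim_finite_subfamily_closed _
    (fun Z : {Z : Set α // IsClopen Z ∧ x ∈ Z} => Z.2.1.isClosed) h
  refine ⟨⋂ Z ∈ t, Z.1, isClopen_biInter_finset fun Z _ => Z.2.1, mem_iInter₂.2 fun Z _ => Z.2.2,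
    fun y hy => by_contra fun hyU => ?_⟩
  exact (ht ▸ mem_inter hyU hy : y ∈ (∅ : Set α))

/-- Boundary bumping. -/
theorem exists_mem_connectedComponentIn_notMem [T2Space α] {Q V O : Set α}
    (hQ : IsPreconnected Q) (hV : IsCompact V) (hVQ : V ⊆ Q) (hO : IsOpen O) (hQO : Q ∩ O ⊆ V)
    (hQV : ¬Q ⊆ V) {p : α} (hp : p ∈ V) : ∃ z ∈ connectedComponentIn V p, z ∉ O := by
  by_contra! h
  have : CompactSpace V := isCompact_iff_compactSpace.mp hV
  obtain ⟨Z, hZ, hpZ, hZO⟩ := exists_isClopen_of_connectedComponent_subset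
    (hO.preimage continuous_subtype_val) fun v hv =>
      h _ (connectedComponentIn_eq_image hp ▸ mem_image_of_mem _ hv)
  obtain ⟨W, hW, rfl⟩ := isOpen_induced_iff.mp hZ.isOpen
  have hZc : IsClosed (Subtype.val '' (Subtype.val ⁻¹' W : Set V)) :=
    (hZ.isClosed.isCompact.image continuous_subtype_val).isClosed
  obtain ⟨x₀, hx₀Q, hx₀V⟩ := not_subset.mp hQV
  obtain ⟨y, hyQ, ⟨hyW, hyO⟩, hyZ⟩ := hQ _ _ (hW.inter hO) hZc.isOpen_compl
    (fun y hy => or_iff_not_imp_right.mpr fun hyZ => by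
      obtain ⟨v, hv, rfl⟩ := not_not.mp hyZ
      exact ⟨hv, hZO hv⟩)
    ⟨p, hVQ hp, hpZ, hZO hpZ⟩ ⟨x₀, hx₀Q, fun ⟨v, _, hv⟩ => hx₀V (hv ▸ v.2)⟩
  exact hyZ ⟨⟨y, hQO ⟨hyQ, hyO⟩⟩, hyW, rfl⟩

theorem exists_open_separation_of_not_isPreconnected [T2Space α] {K : Set α} (hK : IsCompact K)
    (h : ¬IsPreconnected K) : ∃ u v : Set α, IsOpen u ∧ IsOpen v ∧ K ⊆ u ∪ v ∧ Disjoint u v ∧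
      (K ∩ u).Nonempty ∧ (K ∩ v).Nonempty := by
  simp only [isPreconnected_iff_subset_of_fully_disjoint_closed hK.isClosed, not_forall,
    not_or, not_subset] at h
  obtain ⟨a, b, ha, hb, hKab, hab, ⟨x, hxK, hxa⟩, ⟨y, hyK, hyb⟩⟩ := h
  obtain ⟨u, v, hu, hv, hau, hbv, huv⟩ := SeparatedNhds.of_isCompact_isCompact
    (hK.inter_right ha) (hK.inter_right hb) (hab.mono inter_subset_right inter_subset_right)
  refine ⟨u, v, hu, hv, fun z hz => ?_, huv, ⟨y, hyK, hau ⟨hyK, ?_⟩⟩, ⟨x, hxK, hbv ⟨hxK, ?_⟩⟩⟩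
  · exact (hKab hz).imp (fun hza => hau ⟨hz, hza⟩) (fun hzb => hbv ⟨hz, hzb⟩)
  · exact (hKab hyK).resolve_right hyb
  · exact (hKab hxK).resolve_left hxa

instance Subtype.closedIicTopology [Preorder α] [ClosedIicTopology α] {p : α → Prop} :
    ClosedIicTopology (Subtype p) :=
  ⟨fun a => (isClosed_Iic (a := a.1)).preimage continuous_subtype_val⟩

instance Subtype.closedIciTopology [Preorder α] [ClosedIciTopology α] {p : α → Prop} :
    ClosedIciTopology (Subtype p) :=
  ⟨fun a => (isClosed_Ici (a := a.1)).preimage continuous_subtype_val⟩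

namespace TopologicalSpace.NonemptyCompacts

instance [T2Space α] : ClosedIicTopology (NonemptyCompacts α) :=
  ⟨fun K => isClosed_subsets_of_isClosed K.isCompact.isClosed⟩

instance [T1Space α] : ClosedIciTopology (NonemptyCompacts α) := ⟨fun K => by
  have : Ici K = ⋂ x ∈ (K : Set α), {L : NonemptyCompacts α | ((L : Set α) ∩ {x}).Nonempty} := by
    ext L
    simp only [mem_Ici, SetLike.le_def, mem_iInter₂, inter_singleton_nonempty, mem_ofPred_eq]
    rfl
  rw [this]
  exact isClosed_biInter fun x _ => isClosed_inter_nonempty_of_isClosed isClosed_singleton⟩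

theorem isClosed_setOf_isPreconnected [T2Space α] :
    IsClosed {K : NonemptyCompacts α | IsPreconnected (K : Set α)} := by
  refine isOpen_compl_iff.mp <| isOpen_iff_forall_mem_open.mpr fun K hK => ?_
  obtain ⟨u, v, hu, hv, hKuv, huv, hKu, hKv⟩ :=
    exists_open_separation_of_not_isPreconnected K.isCompact hK
  refine ⟨{L | (L : Set α) ⊆ u ∪ v} ∩ {L | ((L : Set α) ∩ u).Nonempty} ∩
      {L | ((L : Set α) ∩ v).Nonempty}, fun L ⟨⟨hL, hLu⟩, hLv⟩ hLc => ?_,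
    ((isOpen_subsets_of_isOpen (hu.union hv)).inter (isOpen_inter_nonempty_of_isOpen hu)).inter
      (isOpen_inter_nonempty_of_isOpen hv), ⟨⟨hKuv, hKu⟩, hKv⟩⟩
  obtain ⟨x, -, hxu, hxv⟩ := hLc u v hu hv hL hLu hLv
  exact huv.ne_of_mem hxu hxv rfl

end TopologicalSpace.NonemptyCompacts

end Topology

section OrderArc
variable {Y : Type*} [PartialOrder Y] {μ : Y → ℝ}

theorem StrictMono.eq_of_le_of_apply_eq (hμ : StrictMono μ) {a b : Y} (hab : a ≤ b)
    (h : μ a = μ b) : a = b :=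
  hab.eq_or_lt.resolve_right fun hlt => (hμ hlt).ne h

theorem Flag.le_of_apply_le (s : Flag Y) (hμ : StrictMono μ) {a b : Y} (ha : a ∈ s) (hb : b ∈ s)
    (h : μ a ≤ μ b) : a ≤ b :=
  (s.le_or_le ha hb).elim id fun hba =>
    hμ.eq_of_le_of_apply_eq hba (h.antisymm' (hμ.monotone hba)) ▸ le_rfl

theorem Flag.eq_of_apply_eq (s : Flag Y) (hμ : StrictMono μ) {a b : Y} (ha : a ∈ s) (hb : b ∈ s)
    (h : μ a = μ b) : a = b :=
  (s.le_of_apply_le hμ ha hb h.le).antisymm (s.le_of_apply_le hμ hb ha h.ge)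

variable [TopologicalSpace Y]

theorem Flag.isClosed [ClosedIicTopology Y] [ClosedIciTopology Y] (s : Flag Y) :
    IsClosed (s : Set Y) := by
  have : (s : Set Y) = ⋂ b ∈ s, Iic b ∪ Ici b := by
    ext a
    rw [SetLike.mem_coe, Flag.mem_iff_forall_le_or_ge]
    simp only [mem_iInter₂, mem_union, mem_Iic, mem_Ici]
  rw [this]
  exact isClosed_biInter fun b _ => isClosed_Iic.union isClosed_Ici

variable [CompactSpace Y] [ClosedIicTopology Y] [ClosedIciTopology Y] [DenselyOrdered Y]

/-- A value of `μ` missed on a maximal chain would split the chain into two compact pieces, and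
the largest element of the lower piece and the least one of the upper piece would be consecutive,
which density rules out. -/
theorem Flag.Icc_subset_image (s : Flag Y) (hμc : Continuous μ) (hμ : StrictMono μ) {P Q : Y}
    (hP : P ∈ s) (hQ : Q ∈ s) : Icc (μ P) (μ Q) ⊆ μ '' s := by
  intro v ⟨hPv, hvQ⟩
  by_contra hv
  have hs : IsCompact (s : Set Y) := s.isClosed.isCompact
  obtain ⟨D, ⟨hDs, hDv⟩, hDmax⟩ := (hs.inter_right (isClosed_Iic.preimage hμc)).exists_isMaxOn
    ⟨P, hP, hPv⟩ hμc.continuousOn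
  obtain ⟨C, ⟨hCs, hCv⟩, hCmin⟩ := (hs.inter_right (isClosed_Ici.preimage hμc)).exists_isMinOn
    ⟨Q, hQ, hvQ⟩ hμc.continuousOn
  have hlow : ∀ b ∈ s, μ b ≤ v → b ≤ D := fun b hb hbv =>
    s.le_of_apply_le hμ hb hDs (hDmax ⟨hb, hbv⟩)
  have hhigh : ∀ b ∈ s, v ≤ μ b → C ≤ b := fun b hb hbv =>
    s.le_of_apply_le hμ hCs hb (hCmin ⟨hb, hbv⟩)
  have hDC : μ D < μ C := (lt_of_le_of_ne (mem_Iic.mp hDv) fun h => hv ⟨D, hDs, h⟩).trans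
    (lt_of_le_of_ne (mem_Ici.mp hCv) fun h => hv ⟨C, hCs, h.symm⟩)
  obtain ⟨E, hDE, hEC⟩ := exists_between
    (lt_of_le_of_ne (s.le_of_apply_le hμ hDs hCs hDC.le) (ne_of_apply_ne μ hDC.ne))
  have hE : E ∈ s := Flag.mem_iff_forall_le_or_ge.mpr fun b hb => (le_total (μ b) v).elim
    (fun h => Or.inr ((hlow b hb h).trans hDE.le)) (fun h => Or.inl (hEC.le.trans (hhigh b hb h)))
  exact (le_total (μ E) v).elim (fun h => (hlow E hE h).not_gt hDE)
    (fun h => (hhigh E hE h).not_gt hEC)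

/-- An order arc from `P` to `Q`: a maximal chain through `P` and `Q`, parametrized by `μ`. -/
theorem exists_orderArc (hμc : Continuous μ) (hμ : StrictMono μ) {P Q : Y} (hPQ : P ≤ Q) :
    ∃ γ : ℝ → Y, Continuous γ ∧ Monotone γ ∧ (∀ s, γ s ∈ Icc P Q) ∧ (∀ s ≤ μ P, γ s = P) ∧
      ∀ s, μ Q ≤ s → γ s = Q := by
  obtain ⟨c, hP, hQ⟩ := Flag.exists_mem_mem hPQ
  have : CompactSpace c := isCompact_iff_compactSpace.mp c.isClosed.isCompact
  have he : IsClosedEmbedding fun C : c => μ C :=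
    (hμc.comp continuous_subtype_val).isClosedEmbedding fun C D h =>
      Subtype.ext (c.eq_of_apply_eq hμ C.2 D.2 h)
  choose g hgc hgμ using fun v : Icc (μ P) (μ Q) => c.Icc_subset_image hμc hμ hP hQ v.2
  have hG : Continuous fun v => (⟨g v, hgc v⟩ : c) :=
    he.isInducing.continuous_iff.mpr (by simpa only [comp_def, hgμ] using continuous_subtype_val)
  let proj := projIcc (μ P) (μ Q) (hμ.monotone hPQ)
  refine ⟨fun s => g (proj s), continuous_subtype_val.comp (hG.comp continuous_projIcc),
    fun s s' h => c.le_of_apply_le hμ (hgc _) (hgc _)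
      (by rw [hgμ, hgμ]; exact monotone_projIcc _ h),
    fun s => ⟨?_, ?_⟩, fun s hs => ?_, fun s hs => ?_⟩
  · exact c.le_of_apply_le hμ hP (hgc _) (by rw [hgμ]; exact (proj s).2.1)
  · exact c.le_of_apply_le hμ (hgc _) hQ (by rw [hgμ]; exact (proj s).2.2)
  · exact c.eq_of_apply_eq hμ (hgc _) hP (by simp only [hgμ, proj, projIcc_of_le_left _ hs])
  · exact c.eq_of_apply_eq hμ (hgc _) hQ (by simp only [hgμ, proj, projIcc_of_right_le _ hs])

end OrderArc

section ArcOfPath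

theorem image_Icc_eq_of_ordConnected_fiber {M : Type*} {F : ℝ → M}
    (hfib : ∀ m, (F ⁻¹' {m}).OrdConnected) {a x y : ℝ} (hax : a ≤ x) (hxy : x ≤ y)
    (he : F x = F y) : F '' Icc a y = F '' Icc a x := by
  refine (image_mono (Icc_subset_Icc_right hxy)).antisymm' ?_
  rintro _ ⟨z, ⟨haz, hzy⟩, rfl⟩
  rcases le_total z x with hzx | hxz
  · exact ⟨z, ⟨haz, hzx⟩, rfl⟩
  · exact ⟨x, ⟨hax, le_rfl⟩, he.trans ((hfib (F y)).out he rfl ⟨hxz, hzy⟩).symm⟩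

variable {M : Type*} [MetricSpace M] {F : ℝ → M}

theorem continuous_infDist_image_uIcc (hF : Continuous F) (a : ℝ) (z : M) :
    Continuous fun x => infDist z (F '' uIcc a x) := by
  let I : NonemptyCompacts ℝ := ⟨⟨Icc 0 1, isCompact_Icc⟩, nonempty_Icc.mpr zero_le_one⟩
  have hI : Continuous fun x : ℝ => I.map (fun θ => F (AffineMap.lineMap a x θ)) (by fun_prop) :=
    continuous_const.nonemptyCompacts_map' (g := fun x θ => F (AffineMap.lineMap a x θ))
      (by fun_prop)
  have himage : ∀ x, F '' uIcc a x =
      (I.map (fun θ => F (AffineMap.lineMap a x θ)) (by fun_prop) : Set M) := fun x => by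
    rw [NonemptyCompacts.coe_map, ← segment_eq_uIcc, segment_eq_image_lineMap, image_image]
    rfl
  simp_rw [himage]
  exact (lipschitz_infDist_set z).continuous.comp hI

theorem exists_apply_mem_image_Icc_infDist_pos (hF : Continuous F)
    (hfib : ∀ m, (F ⁻¹' {m}).OrdConnected) {u : ℕ → ℝ} (hu : DenseRange u) {a x y : ℝ}
    (hax : a ≤ x) (hxy : x ≤ y) (hne : F x ≠ F y) :
    ∃ k, F (u k) ∈ F '' Icc a y ∧ 0 < infDist (F (u k)) (F '' Icc a x) := by
  have hyS : F y ∉ F '' Icc a x := fun ⟨z, ⟨_, hzx⟩, hz⟩ =>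
    hne ((hfib (F y)).out hz rfl ⟨hzx, hxy⟩)
  set δ := infDist (F y) (F '' Icc a x)
  have hδ : 0 < δ :=
    ((isCompact_Icc.image hF).isClosed.notMem_iff_infDist_pos ⟨F a, a, ⟨le_rfl, hax⟩, rfl⟩).mp hyS
  have hnear : (F ⁻¹' ball (F y) (δ / 2) ∩ Ioo x y).Nonempty := mem_closure_iff_nhds.mp
    (closure_Ioo (hxy.lt_of_ne fun h => hne (h ▸ rfl)).ne ▸ right_mem_Icc.mpr hxy)
    _ (hF.continuousAt.preimage_mem_nhds (ball_mem_nhds _ (half_pos hδ)))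
  obtain ⟨k, hkδ, hk⟩ := hu.exists_mem_open ((isOpen_ball.preimage hF).inter isOpen_Ioo) hnear
  refine ⟨k, mem_image_of_mem F ⟨hax.trans hk.1.le, hk.2.le⟩, ?_⟩
  linarith [infDist_le_infDist_add_dist (x := F y) (y := F (u k)) (s := F '' Icc a x),
    dist_comm (F y) (F (u k)), mem_ball.mp hkδ]

/-- `Φ` is built from the distances of the points `F (u k)`, `u` dense in `ℝ`, to the initial
pieces `F '' [a, x]` of the path. -/
theorem exists_monotone_separating (hF : Continuous F) (hfib : ∀ m, (F ⁻¹' {m}).OrdConnected)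
    (a : ℝ) : ∃ Φ : ℝ → ℝ, Continuous Φ ∧ ∀ ⦃x y⦄, a ≤ x → x ≤ y →
      (F x = F y → Φ x = Φ y) ∧ (F x ≠ F y → Φ x < Φ y) := by
  obtain ⟨u, hu⟩ := exists_dense_seq ℝ
  set ρ : ℕ → ℝ → ℝ := fun k x => min 1 (infDist (F (u k)) (F '' uIcc a x))
  have hterm : ∀ k x, ‖(1 / 2 : ℝ) ^ k * ρ k x‖ ≤ (1 / 2) ^ k := fun k x => by
    rw [norm_mul, norm_pow, Real.norm_of_nonneg (by norm_num : (0 : ℝ) ≤ 1 / 2),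
      Real.norm_of_nonneg (le_min zero_le_one infDist_nonneg)]
    exact mul_le_of_le_one_right (by positivity) (min_le_left _ _)
  have hsum : ∀ x, Summable fun k => (1 / 2 : ℝ) ^ k * ρ k x := fun x =>
    summable_geometric_two.of_norm_bounded (hterm · x)
  have hanti : ∀ ⦃x y⦄, a ≤ x → x ≤ y → ∀ k, ρ k y ≤ ρ k x := fun x y hax hxy k => by
    refine min_le_min le_rfl (infDist_le_infDist_of_subset (image_mono ?_) ⟨F a, a, ?_, rfl⟩)
    · rw [uIcc_of_le hax, uIcc_of_le (hax.trans hxy)]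
      exact Icc_subset_Icc_right hxy
    · exact left_mem_uIcc
  refine ⟨fun x => -∑' k, (1 / 2 : ℝ) ^ k * ρ k x, (continuous_tsum (fun k => continuous_const.mul
    (continuous_const.min (continuous_infDist_image_uIcc hF a _))) summable_geometric_two
      hterm).neg, fun x y hax hxy => ⟨fun he => ?_, fun hne => ?_⟩⟩
  · simp only [ρ, uIcc_of_le hax, uIcc_of_le (hax.trans hxy),
      image_Icc_eq_of_ordConnected_fiber hfib hax hxy he]
  obtain ⟨k, hky, hkx⟩ := exists_apply_mem_image_Icc_infDist_pos hF hfib hu hax hxy hne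
  have hρy : ρ k y = 0 := by
    simp only [ρ, uIcc_of_le (hax.trans hxy), infDist_zero_of_mem hky, min_eq_right zero_le_one]
  refine neg_lt_neg ((hsum y).tsum_lt_tsum (i := k) (fun j => ?_) ?_ (hsum x))
  · exact mul_le_mul_of_nonneg_left (hanti hax hxy j) (by positivity)
  · rw [hρy, mul_zero]
    exact mul_pos (by positivity) (lt_min one_pos (by rwa [uIcc_of_le hax]))

theorem exists_continuous_injective_comp_eq {K Z N : Type*} [TopologicalSpace K] [CompactSpace K]
    [TopologicalSpace Z] [T2Space Z] [TopologicalSpace N] {Ψ : K → Z} {G : K → N}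
    (hΨ : Continuous Ψ) (hΨs : Surjective Ψ) (hG : Continuous G)
    (hfib : ∀ x y, Ψ x = Ψ y ↔ G x = G y) :
    ∃ g : Z → N, Continuous g ∧ Injective g ∧ ∀ x, g (Ψ x) = G x := by
  have hgΨ : ∀ x, G (surjInv hΨs (Ψ x)) = G x := fun x => (hfib _ _).mp (surjInv_eq hΨs _)
  refine ⟨fun v => G (surjInv hΨs v), ?_, fun v w h => ?_, hgΨ⟩
  · refine (hΨ.isClosedMap.isQuotientMap hΨ hΨs).continuous_iff.mpr ?_
    simpa only [comp_def, hgΨ] using hG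
  · rw [← surjInv_eq hΨs v, ← surjInv_eq hΨs w]
    exact (hfib _ _).mpr h

/-- On `[a, b]`, `F` factors through the function `Φ` of `exists_monotone_separating`, and the
factor embeds `[Φ a, Φ b]`. -/
theorem exists_arc_of_ordConnected_fiber (hF : Continuous F)
    (hfib : ∀ m, (F ⁻¹' {m}).OrdConnected) {a b : ℝ} (hab : a ≤ b) (hne : F a ≠ F b) :
    ∃ f : unitInterval → M, Continuous f ∧ Injective f ∧ f 0 = F a ∧ f 1 = F b ∧
      range f ⊆ range F := by
  obtain ⟨Φ, hΦc, hΦ⟩ := exists_monotone_separating hF hfib a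
  have hsep : ∀ x y : Icc a b, x.1 ≤ y.1 → (Φ x = Φ y ↔ F x = F y) := fun x y h =>
    ⟨fun he => not_not.mp fun hne => ((hΦ x.2.1 h).2 hne).ne he, (hΦ x.2.1 h).1⟩
  have hΦm : ∀ ⦃y z⦄, a ≤ y → y ≤ z → Φ y ≤ Φ z := fun y z hay hyz =>
    (em (F y = F z)).elim (fun e => ((hΦ hay hyz).1 e).le) fun e => ((hΦ hay hyz).2 e).le
  let Ψ : Icc a b → Icc (Φ a) (Φ b) := fun x => ⟨Φ x, hΦm le_rfl x.2.1, hΦm x.2.1 x.2.2⟩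
  have hΨc : Continuous Ψ := (hΦc.comp continuous_subtype_val).subtype_mk _
  have hΨs : Surjective Ψ := fun v => by
    obtain ⟨x, hx, hxv⟩ := intermediate_value_Icc hab hΦc.continuousOn v.2
    exact ⟨⟨x, hx⟩, Subtype.ext hxv⟩
  have hfiber : ∀ x y, Ψ x = Ψ y ↔ F x = F y := fun x y => by
    rw [Subtype.ext_iff]
    rcases le_total x.1 y.1 with h | h
    · exact hsep x y h
    · exact eq_comm.trans ((hsep y x h).trans eq_comm)
  obtain ⟨g, hgc, hginj, hgΨ⟩ :=
    exists_continuous_injective_comp_eq hΨc hΨs (hF.comp continuous_subtype_val) hfiber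
  let e := (iccHomeoI (Φ a) (Φ b) ((hΦ le_rfl hab).2 hne)).symm
  refine ⟨g ∘ e, hgc.comp e.continuous, hginj.comp e.injective, ?_, ?_, ?_⟩
  · have : e 0 = Ψ ⟨a, left_mem_Icc.mpr hab⟩ := Subtype.ext (by simp [e, Ψ])
    simp only [comp_apply, this, hgΨ]
  · have : e 1 = Ψ ⟨b, right_mem_Icc.mpr hab⟩ := Subtype.ext (by simp [e, Ψ])
    simp only [comp_apply, this, hgΨ]
  · rintro _ ⟨s, rfl⟩
    obtain ⟨x, hx⟩ := hΨs (e s)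
    exact ⟨x, by simp only [comp_apply, ← hx, hgΨ]⟩

end ArcOfPath

theorem Monotone.lipschitzWith_one_of_antitone_sub {h : ℝ → ℝ} (hm : Monotone h)
    (ha : Antitone fun c => h c - c) : LipschitzWith 1 h := by
  refine LipschitzWith.of_le_add fun x y => ?_
  rcases le_total x y with hxy | hyx
  · exact (hm hxy).trans (le_add_of_nonneg_right dist_nonneg)
  · have := ha hyx
    simp only at this
    rw [Real.dist_eq, abs_of_nonneg (by linarith)]
    linarith

/-- `h c` is the first time the line `v ↦ (v, v - c)` enters the superlevel set `{g ≥ t}`;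
shifting the line by `δ` changes `h c` by at most `δ`. -/
theorem Monotone.exists_levelCurve {g : ℝ × ℝ → ℝ} (hgm : Monotone g) (hg : Continuous g)
    {t a b b' : ℝ} (ha : g (a, a) < t) (hb : ∀ q, t ≤ g (b, q)) (hb' : ∀ p, t ≤ g (p, b')) :
    ∃ h : ℝ → ℝ, Continuous h ∧ Monotone h ∧ Antitone (fun c => h c - c) ∧
      (∀ c, g (h c, h c - c) = t) ∧ ∀ c, h c ≤ b ∧ h c ≤ c + b' := by
  set S : ℝ → Set ℝ := fun c => {v | t ≤ g (v, v - c)}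
  have hline : ∀ c, Continuous fun v => g (v, v - c) := fun c => by fun_prop
  have hSb : ∀ c, b ∈ S c := fun c => hb _
  have hSb' : ∀ c, c + b' ∈ S c := fun c => by
    simpa only [S, mem_ofPred_eq, add_sub_cancel_left] using hb' (c + b')
  have hSbdd : ∀ c, BddBelow (S c) := fun c => ⟨min a (a + c), fun v hv => by
    by_contra! hlt
    have : g (v, v - c) ≤ g (a, a) :=
      hgm ⟨by simp only; linarith [min_le_left a (a + c)],
        by simp only; linarith [min_le_right a (a + c)]⟩
    exact (lt_irrefl t) (lt_of_le_of_lt (hv.trans this) ha)⟩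
  set h := fun c => sInf (S c)
  have hmem : ∀ c, h c ∈ S c := fun c =>
    (isClosed_le continuous_const (hline c)).csInf_mem ⟨b, hSb c⟩ (hSbdd c)
  have hmono : Monotone h := fun c c' hcc' => csInf_le_csInf (hSbdd c) ⟨b, hSb c'⟩
    fun v (hv : t ≤ g (v, v - c')) => le_trans hv (hgm ⟨le_rfl, by simp only; linarith⟩)
  have hanti : Antitone fun c => h c - c := fun c c' hcc' => by
    have : h c' ≤ h c + (c' - c) := csInf_le (hSbdd c')
      (le_trans (hmem c) (hgm ⟨by simp only; linarith, by simp only; linarith⟩))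
    simp only
    linarith
  have hlevel : ∀ c, g (h c, h c - c) = t := fun c => by
    refine le_antisymm ?_ (hmem c)
    have : Iio (h c) ⊆ {v | g (v, v - c) ≤ t} := fun v hv =>
      le_of_lt (not_le.mp fun (hv' : t ≤ _) => (not_le.mpr hv) (csInf_le (hSbdd c) hv'))
    exact closure_minimal this (isClosed_le (hline c) continuous_const)
      (closure_Iio (h c) ▸ self_mem_Iic)
  exact ⟨h, (hmono.lipschitzWith_one_of_antitone_sub hanti).continuous, hmono, hanti, hlevel,
    fun c => ⟨csInf_le (hSbdd c) (hSb c), csInf_le (hSbdd c) (hSb' c)⟩⟩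

namespace Hyperspace
variable {X : Type*} [MetricSpace X]

instance [CompactSpace X] : CompactSpace (Hyperspace X) := by
  have : IsClosed {K : NonemptyCompacts X | IsConnected (K : Set X)} := by
    simpa only [IsConnected, NonemptyCompacts.nonempty, true_and] using
      NonemptyCompacts.isClosed_setOf_isPreconnected
  exact this.isClosedEmbedding_subtypeVal.compactSpace

/-- The continuum between `P ⊂ Q` is the component through `P` of the points of `Q` at distance
at most `ε / 2` from `P`, where `ε` is the distance to `P` of a point of `Q \ P`. -/
instance : DenselyOrdered (Hyperspace X) := ⟨fun P Q hPQ => by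
  obtain ⟨x₀, hx₀Q, hx₀P⟩ := exists_of_ssubset (show (P.1 : Set X) ⊂ Q.1 from hPQ)
  obtain ⟨p, hp⟩ := P.1.nonempty
  set ε := infDist x₀ P.1
  have hε : 0 < ε := (P.1.isCompact.isClosed.notMem_iff_infDist_pos ⟨p, hp⟩).mp hx₀P
  set V := (Q.1 : Set X) ∩ {y | infDist y P.1 ≤ ε / 2}
  have hVc : IsClosed V :=
    Q.1.isCompact.isClosed.inter (isClosed_le (continuous_infDist_pt _) continuous_const)
  have hPV : (P.1 : Set X) ⊆ V := fun y hy =>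
    ⟨hPQ.le hy, by rw [mem_ofPred_eq, infDist_zero_of_mem hy]; positivity⟩
  have hx₀V : x₀ ∉ V := fun h => (show ¬ε ≤ ε / 2 by linarith) h.2
  set E := connectedComponentIn V p
  have hEV : E ⊆ V := connectedComponentIn_subset V p
  have hEc : IsConnected E := isConnected_connectedComponentIn_iff.mpr (hPV hp)
  obtain ⟨z, hzE, hz⟩ := exists_mem_connectedComponentIn_notMem Q.2.isPreconnected
    (Q.1.isCompact.of_isClosed_subset hVc inter_subset_left) inter_subset_left
    (isOpen_lt (continuous_infDist_pt _) continuous_const)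
    (fun y hy => ⟨hy.1, le_of_lt (show infDist y P.1 < ε / 2 from hy.2)⟩)
    (fun h => hx₀V (h hx₀Q)) (hPV hp)
  refine ⟨⟨⟨⟨E, Q.1.isCompact.of_isClosed_subset (hVc.connectedComponentIn p)
    (hEV.trans inter_subset_left)⟩, hEc.nonempty⟩, hEc⟩, ?_, ?_⟩
  · refine (P.2.isPreconnected.subset_connectedComponentIn hp hPV).ssubset_of_ne fun h => hz ?_
    have : z ∈ (P.1 : Set X) := h ▸ hzE
    rw [mem_ofPred_eq, infDist_zero_of_mem this]
    positivity
  · exact (hEV.trans inter_subset_left).ssubset_of_ne fun h => hx₀V (hEV (h ▸ hx₀Q))⟩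

def union (C D : Hyperspace X) (h : ((C.1 : Set X) ∩ D.1).Nonempty) : Hyperspace X :=
  ⟨C.1 ⊔ D.1, by rw [NonemptyCompacts.coe_sup]; exact C.2.union h D.2⟩

theorem coe_union {C D : Hyperspace X} (h : ((C.1 : Set X) ∩ D.1).Nonempty) :
    ((union C D h).1 : Set X) = (C.1 : Set X) ∪ D.1 :=
  NonemptyCompacts.coe_sup _ _

theorem le_union_left {C D : Hyperspace X} (h : ((C.1 : Set X) ∩ D.1).Nonempty) :
    C ≤ union C D h :=
  le_sup_left (a := C.1)

theorem le_union_right {C D : Hyperspace X} (h : ((C.1 : Set X) ∩ D.1).Nonempty) :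
    D ≤ union C D h :=
  le_sup_right (a := C.1)

theorem union_le {C D E : Hyperspace X} {h : ((C.1 : Set X) ∩ D.1).Nonempty} (hC : C ≤ E)
    (hD : D ≤ E) : union C D h ≤ E :=
  sup_le (a := C.1) hC hD

theorem continuous_union {Z : Type*} [TopologicalSpace Z] {f g : Z → Hyperspace X}
    (hf : Continuous f) (hg : Continuous g) (h : ∀ z, (((f z).1 : Set X) ∩ (g z).1).Nonempty) :
    Continuous fun z => union (f z) (g z) (h z) :=
  ((continuous_subtype_val.comp hf).sup (continuous_subtype_val.comp hg)).subtype_mk _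

theorem exists_coe_eq_connectedComponentIn {S : Set X} (hS : IsCompact S) {x : X} (hx : x ∈ S) :
    ∃ K : Hyperspace X, (K.1 : Set X) = connectedComponentIn S x :=
  ⟨⟨⟨⟨_, hS.of_isClosed_subset (hS.isClosed.connectedComponentIn x)
    (connectedComponentIn_subset _ _)⟩, ⟨x, mem_connectedComponentIn hx⟩⟩,
    isConnected_connectedComponentIn_iff.mpr hx⟩, rfl⟩

end Hyperspace

section WhitneyLevel
variable {X : Type*} [MetricSpace X] [CompactSpace X] {μ : Hyperspace X → ℝ}

theorem exists_whitneyLevel_path (hμc : Continuous μ) (hμ : StrictMono μ) {K A B : Hyperspace X}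
    (hKA : K ≤ A) (hKB : K ≤ B) (hAB : A ≠ B) (hμAB : μ A = μ B) :
    ∃ F : ℝ → Hyperspace X, Continuous F ∧ (∀ m, (F ⁻¹' {m}).OrdConnected) ∧
      (∀ c, μ (F c) = μ A ∧ K ≤ F c ∧ ((F c).1 : Set X) ⊆ A.1 ∪ B.1) ∧
      ∃ a b, a ≤ b ∧ F a = B ∧ F b = A := by
  obtain ⟨σ, hσc, hσm, hσI, hσK, hσA⟩ := exists_orderArc hμc hμ hKA
  obtain ⟨τ, hτc, hτm, hτI, hτK, hτB⟩ := exists_orderArc hμc hμ hKB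
  have hKA' : μ K < μ A :=
    hμ (lt_of_le_of_ne hKA fun h => hAB (hμ.eq_of_le_of_apply_eq (h ▸ hKB) hμAB))
  have hmeet : ∀ p q, (((σ p).1 : Set X) ∩ (τ q).1).Nonempty := fun p q =>
    K.1.nonempty.mono (subset_inter (hσI p).1 (hτI q).1)
  set W : ℝ × ℝ → Hyperspace X := fun p => Hyperspace.union (σ p.1) (τ p.2) (hmeet p.1 p.2)
  have hWm : Monotone W := fun p q hpq =>
    Hyperspace.union_le ((hσm hpq.1).trans (Hyperspace.le_union_left _))
      ((hτm hpq.2).trans (Hyperspace.le_union_right _))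
  obtain ⟨h, hhc, hhm, hha, hlev, hhb⟩ := (hμ.monotone.comp hWm).exists_levelCurve
    (hμc.comp (Hyperspace.continuous_union (hσc.comp continuous_fst) (hτc.comp continuous_snd) _))
    (t := μ A) (a := μ K) (b := μ A) (b' := μ A)
    (lt_of_le_of_lt (hμ.monotone (Hyperspace.union_le (hσK _ le_rfl).le (hτK _ le_rfl).le)) hKA')
    (fun q => hμ.monotone ((hσA _ le_rfl).symm.le.trans (Hyperspace.le_union_left _)))
    (fun p => hμAB.le.trans
      (hμ.monotone ((hτB _ hμAB.ge).symm.le.trans (Hyperspace.le_union_right _))))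
  set F := fun c => W (h c, h c - c)
  have hFμ : ∀ c, μ (F c) = μ A := hlev
  have hFσ : ∀ c, σ (h c) ≤ F c := fun c => Hyperspace.le_union_left _
  have hFτ : ∀ c, τ (h c - c) ≤ F c := fun c => Hyperspace.le_union_right _
  refine ⟨F, Hyperspace.continuous_union (hσc.comp hhc) (hτc.comp (hhc.sub continuous_id)) _,
    fun m => ⟨fun x hx z hz y ⟨hxy, hyz⟩ => ?_⟩,
    fun c => ⟨hFμ c, (hσI _).1.trans (hFσ c), ?_⟩, μ K - μ A, μ A - μ K, by linarith, ?_, ?_⟩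
  · have hyx : F y ≤ F x := Hyperspace.union_le
      ((hσm (hhm hyz)).trans ((hFσ z).trans (hz.trans hx.symm).le)) ((hτm (hha hxy)).trans (hFτ x))
    exact (hμ.eq_of_le_of_apply_eq hyx (by rw [hFμ, hFμ])).trans hx
  · rw [Hyperspace.coe_union]
    exact union_subset_union (hσI _).2 (hτI _).2
  · refine hμ.eq_of_le_of_apply_eq (Hyperspace.union_le ?_ (hτI _).2) (by rw [hFμ, hμAB])
    rw [hσK _ (by linarith [(hhb (μ K - μ A)).2])]
    exact hKB
  · refine hμ.eq_of_le_of_apply_eq (Hyperspace.union_le (hσI _).2 ?_) (hFμ _)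
    rw [hτK _ (by linarith [(hhb (μ A - μ K)).1])]
    exact hKA

theorem exists_whitneyLevel_arc (hμc : Continuous μ) (hμ : StrictMono μ) {K A B : Hyperspace X}
    (hKA : K ≤ A) (hKB : K ≤ B) (hAB : A ≠ B) (hμAB : μ A = μ B) :
    ∃ f : unitInterval → Hyperspace X, Continuous f ∧ Injective f ∧ f 0 = A ∧ f 1 = B ∧
      ∀ s, μ (f s) = μ A ∧ ((f s).1 : Set X) ⊆ A.1 ∪ B.1 ∧ K ≤ f s := by
  obtain ⟨F, hFc, hFfib, hF, a, b, hab, rfl, rfl⟩ :=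
    exists_whitneyLevel_path hμc hμ hKA hKB hAB hμAB
  obtain ⟨f, hfc, hfi, hf0, hf1, hfF⟩ := exists_arc_of_ordConnected_fiber hFc hFfib hab hAB.symm
  refine ⟨f ∘ unitInterval.symm, hfc.comp unitInterval.continuous_symm,
    hfi.comp unitInterval.symm_involutive.injective, by simp [hf1], by simp [hf0], fun s => ?_⟩
  obtain ⟨c, hc⟩ := hfF (mem_range_self (unitInterval.symm s))
  simp only [comp_apply, ← hc]
  exact ⟨(hF c).1, (hF c).2.2, (hF c).2.1⟩

end WhitneyLevel

theorem whitney_level_arc_general (X : Type*) [MetricSpace X] [CompactSpace X]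
    (μ : Hyperspace X → ℝ) (hμcont : Continuous μ)
    (hμmono : ∀ A B : Hyperspace X, (A.1 : Set X) ⊂ (B.1 : Set X) → μ A < μ B)
    (t : ℝ)
    (A B : Hyperspace X) (hA : μ A = t) (hB : μ B = t) (hAB : A ≠ B)
    (hmeet : ((A.1 : Set X) ∩ (B.1 : Set X)).Nonempty) :
    (∃ f : Set.Icc (0 : ℝ) 1 → Hyperspace X, Continuous f ∧ Function.Injective f ∧
      f ⟨0, le_refl 0, zero_le_one⟩ = A ∧ f ⟨1, zero_le_one, le_refl 1⟩ = B ∧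
      ∀ s, μ (f s) = t ∧ ((f s).1 : Set X) ⊆ (A.1 : Set X) ∪ (B.1 : Set X)) ∧
    (∀ K : Set X,
      (∃ x ∈ (A.1 : Set X) ∩ (B.1 : Set X),
          K = connectedComponentIn ((A.1 : Set X) ∩ (B.1 : Set X)) x) →
      ∃ f : Set.Icc (0 : ℝ) 1 → Hyperspace X, Continuous f ∧ Function.Injective f ∧
        f ⟨0, le_refl 0, zero_le_one⟩ = A ∧ f ⟨1, zero_le_one, le_refl 1⟩ = B ∧
        ∀ s, μ (f s) = t ∧ ((f s).1 : Set X) ⊆ (A.1 : Set X) ∪ (B.1 : Set X) ∧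
          K ⊆ ((f s).1 : Set X)) := by
  refine (fun hcomponent => ⟨?_, hcomponent⟩) fun K ⟨x, hx, hK⟩ => ?_
  · obtain ⟨x, hx⟩ := hmeet
    obtain ⟨f, hfc, hfi, hf0, hf1, hf⟩ := hcomponent _ ⟨x, hx, rfl⟩
    exact ⟨f, hfc, hfi, hf0, hf1, fun s => ⟨(hf s).1, (hf s).2.1⟩⟩
  obtain ⟨Kc, hKc⟩ := Hyperspace.exists_coe_eq_connectedComponentIn
    (A.1.isCompact.inter_right B.1.isCompact.isClosed) hx
  rw [← hKc] at hK
  subst hK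
  have hKAB : (Kc.1 : Set X) ⊆ (A.1 : Set X) ∩ B.1 := hKc ▸ connectedComponentIn_subset _ _
  obtain ⟨f, hfc, hfi, hf0, hf1, hf⟩ := exists_whitneyLevel_arc hμcont
    (fun C D h => hμmono C D h) (hKAB.trans inter_subset_left)
    (hKAB.trans inter_subset_right) hAB (hA.trans hB.symm)
  exact ⟨f, hfc, hfi, hf0, hf1, fun s => ⟨(hf s).1.trans hA, (hf s).2⟩⟩

/-- Lemma 14.8.1 of Nadler: for distinct intersecting elements `A, B` of a Whitney level
`μ⁻¹(t)`, there is an arc in `μ⁻¹(t)` from `A` to `B` all of whose elements lie in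
`A ∪ B`; moreover, for any prescribed connected component `K` of `A ∩ B` the arc can be
chosen so that every element of it contains `K`. -/
theorem whitney_level_arc (X : Type*) [MetricSpace X] [CompactSpace X] [ConnectedSpace X]
    (μ : Hyperspace X → ℝ) (hμcont : Continuous μ)
    (hμ0 : ∀ A : Hyperspace X, (A.1 : Set X).Subsingleton → μ A = 0)
    (hμmono : ∀ A B : Hyperspace X, (A.1 : Set X) ⊂ (B.1 : Set X) → μ A < μ B)
    (t : ℝ) (ht0 : 0 < t)
    (httop : t < μ ⟨⟨⟨Set.univ, isCompact_univ⟩, Set.univ_nonempty⟩, isConnected_univ⟩)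
    (A B : Hyperspace X) (hA : μ A = t) (hB : μ B = t) (hAB : A ≠ B)
    (hmeet : ((A.1 : Set X) ∩ (B.1 : Set X)).Nonempty) :
    (∃ f : Set.Icc (0 : ℝ) 1 → Hyperspace X, Continuous f ∧ Function.Injective f ∧
      f ⟨0, le_refl 0, zero_le_one⟩ = A ∧ f ⟨1, zero_le_one, le_refl 1⟩ = B ∧
      ∀ s, μ (f s) = t ∧ ((f s).1 : Set X) ⊆ (A.1 : Set X) ∪ (B.1 : Set X)) ∧
    (∀ K : Set X,
      (∃ x ∈ (A.1 : Set X) ∩ (B.1 : Set X),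
          K = connectedComponentIn ((A.1 : Set X) ∩ (B.1 : Set X)) x) →
      ∃ f : Set.Icc (0 : ℝ) 1 → Hyperspace X, Continuous f ∧ Function.Injective f ∧
        f ⟨0, le_refl 0, zero_le_one⟩ = A ∧ f ⟨1, zero_le_one, le_refl 1⟩ = B ∧
        ∀ s, μ (f s) = t ∧ ((f s).1 : Set X) ⊆ (A.1 : Set X) ∪ (B.1 : Set X) ∧
          K ⊆ ((f s).1 : Set X)) :=
  whitney_level_arc_general X μ hμcont hμmono t A B hA hB hAB hmeet
end
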